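/- arXiv:1004.2576 — 4 statements merged into one kernel-verified Lean document; each statement's English description precedes it below -/
import Mathlib

section
/- Let A be a self-adjoint trace-class operator on a separable Hilbert space H and let P be an orthogonal projection on H. For t ∈ ℝ, let U(t;B) = e^{iBt}. Then for every t ∈ ℝ, the trace norm satisfies ‖P(U(t;A) − U(t;PAP))P‖_{S₁} ≤ |t| · ‖PA(I−P)‖_{S₁}. -/
open scoped ENNReal

/-- The trace norm of a bounded operator on a Hilbert space, defined as the supremum
over pairs of finite orthonormal families of `∑ j |⟪T e_j, f_j⟫|`. -/
noncomputable def traceNorm {H : Type*} [NormedAddCommGroup H] [InnerProductSpace ℂ H]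
    (T : H →L[ℂ] H) : ℝ≥0∞ :=
  ⨆ (n : ℕ) (e : Fin n → H) (f : Fin n → H)
    (_ : Orthonormal ℂ e) (_ : Orthonormal ℂ f),
      ∑ j, (‖(inner ℂ (T (e j)) (f j) : ℂ)‖₊ : ℝ≥0∞)

/-- `evol t B = e^{iBt}`. -/
noncomputable def evol {H : Type*} [NormedAddCommGroup H] [InnerProductSpace ℂ H]
    [CompleteSpace H] (t : ℝ) (B : H →L[ℂ] H) : H →L[ℂ] H :=
  NormedSpace.exp ((Complex.I * (t : ℂ)) • B)

/-!
Duhamel's formula gives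
`P (e^{itA} - e^{itPAP}) P = ∫₀ᵗ i e^{i(t-s)PAP} PA(1-P) e^{isA} P ds`,
where `P` has been moved through `e^{i(t-s)PAP}` because it commutes with `PAP`. The trace norm
does not increase under multiplication by unitaries or, on the right, by an orthogonal
projection, so the integrand has trace norm at most `‖PA(1-P)‖_{S₁}`; integrating over `[0, t]`
gives the factor `|t|`.
-/

open NormedSpace ContinuousLinearMap MeasureTheory intervalIntegral

section Duhamel

variable {𝔸 : Type*} [NormedRing 𝔸] [NormedAlgebra ℝ 𝔸] [CompleteSpace 𝔸]

lemma continuous_exp_smul_mul_exp_smul (a b c : 𝔸) (t : ℝ) :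
    Continuous fun s : ℝ => exp ((t - s) • b) * c * exp (s • a) := by
  let +nondep : NormedAlgebra ℚ 𝔸 := .restrictScalars ℚ ℝ 𝔸
  fun_prop

theorem exp_smul_sub_exp_smul_eq_integral (a b : 𝔸) (t : ℝ) :
    exp (t • a) - exp (t • b) = ∫ s in 0..t, exp ((t - s) • b) * (a - b) * exp (s • a) := by
  have hderiv : ∀ s : ℝ, HasDerivAt (fun s : ℝ => exp ((t - s) • b) * exp (s • a))
      (exp ((t - s) • b) * (a - b) * exp (s • a)) s := fun s => by
    have h₁ := (hasDerivAt_exp_smul_const b (t - s)).scomp s ((hasDerivAt_id s).const_sub t)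
    refine (h₁.mul (hasDerivAt_exp_smul_const' a s)).congr_deriv ?_
    rw [neg_one_smul, mul_sub, sub_mul, mul_assoc, neg_mul, neg_add_eq_sub, mul_assoc]
    rfl
  rw [integral_eq_sub_of_hasDerivAt (fun s _ => hderiv s)
    ((continuous_exp_smul_mul_exp_smul a b _ t).intervalIntegrable 0 t)]
  simp

end Duhamel

section TraceNorm

variable {H : Type*} [NormedAddCommGroup H] [InnerProductSpace ℂ H] {n : ℕ}

/- The sums in `traceNorm` are the ℓ¹-norms of these coefficient vectors, so `traceNorm` is a
supremum of continuous seminorms; subadditivity and the integral bound come from this. -/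
noncomputable def matrixCoeffs (e f : Fin n → H) : (H →L[ℂ] H) →L[ℂ] PiLp 1 (fun _ : Fin n => ℂ) :=
  (PiLp.continuousLinearEquiv 1 ℂ _).symm.toContinuousLinearMap.comp
    (ContinuousLinearMap.pi fun j => (innerSL ℂ (f j)).comp (apply ℂ H (e j)))

@[simp]
lemma matrixCoeffs_apply (e f : Fin n → H) (T : H →L[ℂ] H) (j : Fin n) :
    matrixCoeffs e f T j = inner ℂ (f j) (T (e j)) := rfl

lemma enorm_matrixCoeffs (e f : Fin n → H) (T : H →L[ℂ] H) :
    ‖matrixCoeffs e f T‖ₑ = ∑ j, (‖(inner ℂ (T (e j)) (f j) : ℂ)‖₊ : ℝ≥0∞) := by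
  rw [enorm_eq_nnnorm, PiLp.nnnorm_eq_of_L1, ENNReal.ofNNReal_finsetSum]
  congr! 2 with j
  rw [matrixCoeffs_apply, ← NNReal.coe_inj, coe_nnnorm, coe_nnnorm, norm_inner_symm]

lemma traceNorm_eq_iSup (T : H →L[ℂ] H) :
    traceNorm T = ⨆ (n : ℕ) (e : Fin n → H) (f : Fin n → H)
      (_ : Orthonormal ℂ e) (_ : Orthonormal ℂ f), ‖matrixCoeffs e f T‖ₑ := by
  simp only [enorm_matrixCoeffs, traceNorm]

lemma enorm_matrixCoeffs_le_traceNorm (T : H →L[ℂ] H) {e f : Fin n → H}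
    (he : Orthonormal ℂ e) (hf : Orthonormal ℂ f) : ‖matrixCoeffs e f T‖ₑ ≤ traceNorm T := by
  rw [traceNorm_eq_iSup]
  exact le_iSup_of_le n <| le_iSup_of_le e <| le_iSup_of_le f <| le_iSup_of_le he <|
    le_iSup_of_le hf le_rfl

lemma traceNorm_le {T : H →L[ℂ] H} {C : ℝ≥0∞}
    (h : ∀ (n : ℕ) (e f : Fin n → H), Orthonormal ℂ e → Orthonormal ℂ f →
      ‖matrixCoeffs e f T‖ₑ ≤ C) : traceNorm T ≤ C := by
  rw [traceNorm_eq_iSup]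
  exact iSup₂_le fun n e => iSup₂_le fun f he => iSup_le fun hf => h n e f he hf

@[simp]
lemma traceNorm_zero : traceNorm (0 : H →L[ℂ] H) = 0 :=
  nonpos_iff_eq_zero.1 <| traceNorm_le fun _ _ _ _ _ => by simp

lemma traceNorm_add_le (S T : H →L[ℂ] H) : traceNorm (S + T) ≤ traceNorm S + traceNorm T :=
  traceNorm_le fun _ _ _ he hf => by
    rw [map_add]
    exact (enorm_add_le _ _).trans <| add_le_add (enorm_matrixCoeffs_le_traceNorm S he hf)
      (enorm_matrixCoeffs_le_traceNorm T he hf)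

lemma traceNorm_smul_le (c : ℂ) (T : H →L[ℂ] H) : traceNorm (c • T) ≤ ‖c‖ₑ * traceNorm T :=
  traceNorm_le fun _ _ _ he hf => by
    rw [map_smul, enorm_smul]
    exact mul_le_mul_right (enorm_matrixCoeffs_le_traceNorm T he hf) _

variable [CompleteSpace H]

lemma Orthonormal.comp_isometry {V : H →L[ℂ] H} (hV : star V * V = 1) {e : Fin n → H}
    (he : Orthonormal ℂ e) : Orthonormal ℂ (V ∘ e) := by
  rw [orthonormal_iff_ite] at he ⊢
  intro i j
  rw [Function.comp_apply, Function.comp_apply, ← adjoint_inner_left, ← star_eq_adjoint,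
    ← comp_apply, ← mul_def, hV, one_apply_eq_self, he]

lemma traceNorm_mul_mul_le {U V : H →L[ℂ] H} (hU : U * star U = 1) (hV : star V * V = 1)
    (T : H →L[ℂ] H) : traceNorm (U * T * V) ≤ traceNorm T :=
  traceNorm_le fun _ e f he hf => by
    have hUf : Orthonormal ℂ (⇑(star U) ∘ f) := hf.comp_isometry (by rwa [star_star])
    have : matrixCoeffs e f (U * T * V) = matrixCoeffs (V ∘ e) (⇑(star U) ∘ f) T := by
      ext j
      simp [star_eq_adjoint, adjoint_inner_left]
    exact this ▸ enorm_matrixCoeffs_le_traceNorm T (he.comp_isometry hV) hUf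

/- `R = 2P - 1` is a unitary reflection and `P = (1 + R) / 2`. -/
lemma traceNorm_mul_orthogonalProjection_le {P : H →L[ℂ] H} (hPidem : IsIdempotentElem P)
    (hPsa : IsSelfAdjoint P) (T : H →L[ℂ] H) : traceNorm (T * P) ≤ traceNorm T := by
  set R := (2 : ℂ) • P - 1
  have hR : star R * R = 1 := by
    simp only [R, star_sub, star_smul, hPsa.star_eq, star_one, sub_mul, mul_sub, mul_one, one_mul,
      hPidem.eq, smul_mul_assoc, mul_smul_comm, star_ofNat]
    module
  have hTP : T * P = (2⁻¹ : ℂ) • (T + 1 * T * R) := by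
    simp only [R, one_mul, mul_sub, mul_smul_comm, mul_one]
    module
  calc traceNorm (T * P) ≤ ‖(2⁻¹ : ℂ)‖ₑ * (traceNorm T + traceNorm (1 * T * R)) := by
        rw [hTP]
        exact (traceNorm_smul_le _ _).trans (mul_le_mul_right (traceNorm_add_le _ _) _)
    _ ≤ 2⁻¹ * (traceNorm T + traceNorm T) := by
        rw [enorm_inv two_ne_zero, enorm_eq_nnnorm, Complex.nnnorm_ofNat, ENNReal.coe_ofNat]
        gcongr
        exact traceNorm_mul_mul_le (by simp) hR T
    _ = traceNorm T := by
        rw [← two_mul, ← mul_assoc, ENNReal.inv_mul_cancel two_ne_zero ENNReal.ofNat_ne_top,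
          one_mul]

lemma traceNorm_intervalIntegral_le {F : ℝ → H →L[ℂ] H} {a b : ℝ} {C : ℝ≥0∞}
    (hF : ∀ s ∈ Set.uIoc a b, traceNorm (F s) ≤ C) :
    traceNorm (∫ s in a..b, F s) ≤ ENNReal.ofReal |b - a| * C := by
  by_cases hint : IntervalIntegrable F volume a b
  swap
  · simp [integral_undef hint]
  rcases eq_or_ne C ⊤ with rfl | hC
  · rcases eq_or_ne a b with rfl | hab
    · simp
    · rw [ENNReal.mul_top (by simpa [sub_eq_zero] using hab.symm)]
      exact le_top
  lift C to NNReal using hC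
  refine traceNorm_le fun n e f he hf => ?_
  have hbound : ∀ s ∈ Set.uIoc a b, ‖matrixCoeffs e f (F s)‖ ≤ C := fun s hs => by
    have := (enorm_matrixCoeffs_le_traceNorm _ he hf).trans (hF s hs)
    simpa [enorm_eq_nnnorm, ← NNReal.coe_le_coe] using this
  calc ‖matrixCoeffs e f (∫ s in a..b, F s)‖ₑ
      = ENNReal.ofReal ‖∫ s in a..b, matrixCoeffs e f (F s)‖ := by
        rw [(matrixCoeffs e f).intervalIntegral_comp_comm hint, ofReal_norm]
    _ ≤ ENNReal.ofReal (C * |b - a|) :=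
        ENNReal.ofReal_le_ofReal (norm_integral_le_of_norm_le_const hbound)
    _ = ENNReal.ofReal |b - a| * C := by
        rw [ENNReal.ofReal_mul C.coe_nonneg, mul_comm, ENNReal.ofReal_coe_nnreal]

lemma evol_eq_exp (t : ℝ) (B : H →L[ℂ] H) : evol t B = exp (t • (Complex.I • B)) := by
  rw [evol, mul_comm, mul_smul, Complex.coe_smul]

lemma evol_mem_unitary {B : H →L[ℂ] H} (hB : IsSelfAdjoint B) (t : ℝ) :
    evol t B ∈ unitary (H →L[ℂ] H) := by
  let +nondep : NormedAlgebra ℚ (H →L[ℂ] H) := .restrictScalars ℚ ℂ (H →L[ℂ] H)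
  refine exp_mem_unitary_of_mem_skewAdjoint ?_
  rw [skewAdjoint.mem_iff, star_smul, hB.star_eq, ← neg_smul]
  congr 1
  simp

lemma proj_mul_evol_sub_evol_mul_proj_eq_integral {P : H →L[ℂ] H} (hP : IsIdempotentElem P)
    (A : H →L[ℂ] H) (t : ℝ) :
    P * (evol t A - evol t (P * A * P)) * P =
      ∫ s in 0..t, Complex.I • (evol (t - s) (P * A * P) * (P * A * (1 - P)) * evol s A * P) := by
  set B := P * A * P
  have hPB : Commute P B := by
    rw [Commute, SemiconjBy, ← mul_assoc, ← mul_assoc, hP.eq, mul_assoc (P * A), hP.eq]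
  have hPAB : P * (Complex.I • A - Complex.I • B) = Complex.I • (P * A * (1 - P)) := by
    simp only [B, mul_sub, ← mul_assoc, hP.eq, mul_smul_comm, mul_one, smul_sub]
  have hcomm := (mulLeftRight ℂ (H →L[ℂ] H) P P).intervalIntegral_comp_comm
    ((continuous_exp_smul_mul_exp_smul (Complex.I • A) (Complex.I • B)
      (Complex.I • A - Complex.I • B) t).intervalIntegrable (μ := volume) 0 t)
  simp only [mulLeftRight_apply] at hcomm
  rw [evol_eq_exp, evol_eq_exp, exp_smul_sub_exp_smul_eq_integral, ← hcomm]
  refine integral_congr fun s _ => ?_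
  have hPE : P * exp ((t - s) • Complex.I • B) = exp ((t - s) • Complex.I • B) * P :=
    ((hPB.smul_right _).smul_right _).exp_right.eq
  calc _ = exp ((t - s) • Complex.I • B) * (P * (Complex.I • A - Complex.I • B))
        * exp (s • Complex.I • A) * P := by simp only [← mul_assoc, hPE]
    _ = _ := by
        rw [hPAB, evol_eq_exp, evol_eq_exp]
        simp only [smul_mul_assoc, mul_smul_comm]

end TraceNorm

theorem stmt_3_general {H : Type*} [NormedAddCommGroup H] [InnerProductSpace ℂ H]
    [CompleteSpace H]
    (A P : H →L[ℂ] H) (hAsa : IsSelfAdjoint A)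
    (hPidem : IsIdempotentElem P) (hPsa : IsSelfAdjoint P) (t : ℝ) :
    traceNorm (P * (evol t A - evol t (P * A * P)) * P)
      ≤ ENNReal.ofReal |t| * traceNorm (P * A * (1 - P)) := by
  have hB : IsSelfAdjoint (P * A * P) := by simpa [hPsa.star_eq] using hAsa.conjugate P
  rw [proj_mul_evol_sub_evol_mul_proj_eq_integral hPidem]
  refine (traceNorm_intervalIntegral_le fun s _ => ?_).trans_eq (by rw [sub_zero])
  refine (traceNorm_smul_le _ _).trans ?_
  rw [enorm_eq_nnnorm, Complex.nnnorm_I, ENNReal.coe_one, one_mul]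
  exact (traceNorm_mul_orthogonalProjection_le hPidem hPsa _).trans
    (traceNorm_mul_mul_le (evol_mem_unitary hB _).2 (evol_mem_unitary hAsa _).1 _)

/-- Duhamel bound for unitary groups of `A` and `PAP`. -/
theorem stmt_3 {H : Type*} [NormedAddCommGroup H] [InnerProductSpace ℂ H]
    [CompleteSpace H] [TopologicalSpace.SeparableSpace H]
    (A P : H →L[ℂ] H) (hAsa : IsSelfAdjoint A) (hAtr : traceNorm A ≠ ⊤)
    (hPidem : IsIdempotentElem P) (hPsa : IsSelfAdjoint P) (t : ℝ) :
    traceNorm (P * (evol t A - evol t (P * A * P)) * P)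
      ≤ ENNReal.ofReal |t| * traceNorm (P * A * (1 - P)) :=
  stmt_3_general A P hAsa hPidem hPsa t
end

section
/- Let Ω = {ξ ∈ ℝ^d : ξ_d > Ψ(ξ̂)} where Ψ : ℝ^{d−1} → ℝ is Lipschitz with ‖∇Ψ‖_∞ ≤ M_Ψ, and let η_{μ,1}(ξ) = η(ξ − μ) where η ∈ C_0^∞(ℝ^d) satisfies 0 ≤ η ≤ 1, η(ξ)=1 for |ξ| ≤ 1, η(ξ)=0 for |ξ| ≥ 5/4, with ‖∇η‖_∞ ≤ C₀. Then there is a constant C (depending only on d, C₀) such that for all h ∈ ℝ^d and all μ ∈ ℝ^d: ∫_{ℝ^d} |η_{μ,1}(ξ+h) χ_Ω(ξ+h) − η_{μ,1}(ξ) χ_Ω(ξ)|² dξ ≤ C √(1+M_Ψ²) |h|. -/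
open MeasureTheory
set_option maxHeartbeats 1000000

noncomputable def hatE {n : ℕ} (x : EuclideanSpace ℝ (Fin (n+1))) :
    EuclideanSpace ℝ (Fin n) := WithLp.toLp 2 (fun i => x (Fin.castSucc i))

lemma hatE_add {n : ℕ} (x y : EuclideanSpace ℝ (Fin (n+1))) :
    hatE (x + y) = hatE x + hatE y := by ext i; simp [hatE]

lemma hatE_sub {n : ℕ} (x y : EuclideanSpace ℝ (Fin (n+1))) :
    hatE (x - y) = hatE x - hatE y := by ext i; simp [hatE]

lemma hatE_norm_le {n : ℕ} (x : EuclideanSpace ℝ (Fin (n+1))) : ‖hatE x‖ ≤ ‖x‖ := by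
  rw [EuclideanSpace.norm_eq x, EuclideanSpace.norm_eq (hatE x)]
  apply Real.sqrt_le_sqrt
  rw [Fin.sum_univ_castSucc (f := fun j => ‖x j‖^2)]
  exact le_add_of_nonneg_right (sq_nonneg ‖x (Fin.last n)‖)

lemma coordE_le {n : ℕ} (x : EuclideanSpace ℝ (Fin n)) (i : Fin n) : |x i| ≤ ‖x‖ := by
  rw [EuclideanSpace.norm_eq]
  calc |x i| = Real.sqrt ((x i)^2) := (Real.sqrt_sq_eq_abs _).symm
    _ ≤ Real.sqrt (∑ j, ‖x j‖^2) := Real.sqrt_le_sqrt (by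
        have := Finset.single_le_sum (f := fun j => ‖x j‖^2)
          (fun j _ => sq_nonneg _) (Finset.mem_univ i)
        simpa [Real.norm_eq_abs, sq_abs] using this)

lemma hatE_continuous {n : ℕ} : Continuous (hatE (n := n)) := by
  have : Continuous fun x : EuclideanSpace ℝ (Fin (n+1)) =>
      WithLp.toLp 2
        (fun i => x.ofLp (Fin.castSucc i)) :=
    (PiLp.continuous_toLp _ _).comp
      (continuous_pi fun i => (continuous_apply (Fin.castSucc i)).comp
        (PiLp.continuous_ofLp _ _))
  exact this

lemma coordE_continuous {n : ℕ} (i : Fin n) :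
    Continuous (fun x : EuclideanSpace ℝ (Fin n) => x i) :=
  (continuous_apply i).comp (PiLp.continuous_ofLp _ _)

lemma slab_volume (d : ℕ) (Ψ : EuclideanSpace ℝ (Fin d) → ℝ) (hΨ : Continuous Ψ)
    (c : EuclideanSpace ℝ (Fin d)) (R r : ℝ) :
    volume {ξ : EuclideanSpace ℝ (Fin (d+1)) |
      hatE ξ ∈ Metric.closedBall c R ∧ |ξ (Fin.last d) - Ψ (hatE ξ)| ≤ r}
    = ENNReal.ofReal (2*r) * volume (Metric.closedBall c R) := by
  classical
  set B' : Set (Fin d → ℝ) :=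
    (⇑(MeasurableEquiv.toLp 2 (Fin d → ℝ))) ⁻¹' (Metric.closedBall c R) with hB'
  have hB'meas : MeasurableSet B' :=
    (MeasurableEquiv.toLp 2 (Fin d → ℝ)).measurable (measurableSet_closedBall)
  set S' : Set ((Fin d → ℝ) × ℝ) :=
    {q | q.1 ∈ B' ∧ |q.2 - Ψ (WithLp.toLp 2 q.1)| ≤ r} with hS'
  have hΨ' : Continuous fun x : Fin d → ℝ => Ψ (WithLp.toLp 2 x) :=
    hΨ.comp (PiLp.continuous_toLp 2 (fun _ : Fin d => ℝ))
  have hS'meas : MeasurableSet S' := by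
    apply MeasurableSet.inter
    · exact measurable_fst hB'meas
    · have hc : Continuous fun q : (Fin d → ℝ) × ℝ => |q.2 - Ψ (WithLp.toLp 2 q.1)| :=
        (continuous_snd.sub (hΨ'.comp continuous_fst)).abs
      exact (isClosed_le hc continuous_const).measurableSet
  have T1 := EuclideanSpace.volume_preserving_symm_measurableEquiv_toLp (Fin (d+1))
  have T2 := volume_preserving_piFinSuccAbove (fun _ : Fin (d+1) => ℝ) (Fin.last d)
  have T3 : MeasurePreserving (Prod.swap : ℝ × (Fin d → ℝ) → (Fin d → ℝ) × ℝ)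
      volume volume := by
    rw [MeasureTheory.Measure.volume_eq_prod, MeasureTheory.Measure.volume_eq_prod]
    exact MeasureTheory.Measure.measurePreserving_swap
  have T : MeasurePreserving
      (fun ξ : EuclideanSpace ℝ (Fin (d+1)) =>
        Prod.swap ((MeasurableEquiv.piFinSuccAbove (fun _ : Fin (d+1) => ℝ) (Fin.last d))
          (((MeasurableEquiv.toLp 2 (Fin (d+1) → ℝ)).symm) ξ)))
      volume volume := T3.comp (T2.comp T1)
  have hpre : {ξ : EuclideanSpace ℝ (Fin (d+1)) |
      hatE ξ ∈ Metric.closedBall c R ∧ |ξ (Fin.last d) - Ψ (hatE ξ)| ≤ r}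
      = (fun ξ : EuclideanSpace ℝ (Fin (d+1)) =>
        Prod.swap ((MeasurableEquiv.piFinSuccAbove (fun _ : Fin (d+1) => ℝ) (Fin.last d))
          (((MeasurableEquiv.toLp 2 (Fin (d+1) → ℝ)).symm) ξ))) ⁻¹' S' := by
    ext ξ
    simp only [Set.mem_setOf_eq, Set.mem_preimage,
      MeasurableEquiv.coe_mk, MeasurableEquiv.piFinSuccAbove_apply, Prod.swap_prod_mk, hS',
      Fin.succAbove_last, hB', MeasurableEquiv.coe_toLp_symm, MeasurableEquiv.coe_toLp,
      Fin.insertNthEquiv_symm_apply, Prod.fst_swap, Prod.snd_swap]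
    have hrn : (Fin.last d).removeNth (ξ.ofLp)
        = fun i => ξ i.castSucc := by
      funext j
      simp [Fin.removeNth, Fin.succAbove_last]
    rw [hrn]
    exact Iff.rfl
  rw [hpre, T.measure_preimage hS'meas.nullMeasurableSet]
  rw [MeasureTheory.Measure.volume_eq_prod, Measure.prod_apply hS'meas]
  have hslice : ∀ x : Fin d → ℝ, (volume (Prod.mk x ⁻¹' S'))
      = B'.indicator (fun _ => ENNReal.ofReal (2*r)) x := by
    intro x
    by_cases hx : x ∈ B'
    · have : Prod.mk x ⁻¹' S' = Set.Icc (Ψ (WithLp.toLp 2 x) - r) (Ψ (WithLp.toLp 2 x) + r) := by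
        ext t
        simp only [Set.mem_preimage, hS', Set.mem_setOf_eq, Set.mem_Icc, hx, true_and, abs_le]
        constructor <;> intro h' <;> constructor <;> linarith [h'.1, h'.2]
      rw [this, Real.volume_Icc, Set.indicator_of_mem hx]
      ring_nf
    · have : Prod.mk x ⁻¹' S' = ∅ := by
        ext t; simp [hS', hx]
      rw [this, Set.indicator_of_notMem hx]
      simp
  rw [lintegral_congr hslice, lintegral_indicator_const hB'meas]
  congr 1
  exact ((EuclideanSpace.volume_preserving_symm_measurableEquiv_toLp (Fin d)).symm _).measure_preimage
    measurableSet_closedBall.nullMeasurableSet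

/-- L² continuity of shifts for `η_{μ,1}·χ_Ω` with `Ω` a Lipschitz graph
domain. -/
theorem stmt_9 (d : ℕ) (C₀ : ℝ) :
    ∃ C > 0, ∀ (η : EuclideanSpace ℝ (Fin (d+1)) → ℝ),
      ContDiff ℝ (⊤ : ℕ∞) η → HasCompactSupport η →
      (∀ ξ, 0 ≤ η ξ ∧ η ξ ≤ 1) →
      (∀ ξ, ‖ξ‖ ≤ 1 → η ξ = 1) → (∀ ξ, (5:ℝ)/4 ≤ ‖ξ‖ → η ξ = 0) →
      (∀ ξ, ‖fderiv ℝ η ξ‖ ≤ C₀) →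
      ∀ (Ψ : EuclideanSpace ℝ (Fin d) → ℝ) (MΨ : ℝ), 0 ≤ MΨ →
      (∀ x y, |Ψ x - Ψ y| ≤ MΨ * ‖x - y‖) →
      ∀ (μ h : EuclideanSpace ℝ (Fin (d+1))),
        (∫ ξ, |η (ξ + h - μ) *
            Set.indicator {y : EuclideanSpace ℝ (Fin (d+1)) |
              Ψ (WithLp.toLp 2 (fun i : Fin d => y i.castSucc)) < y (Fin.last d)} (fun _ => (1:ℝ)) (ξ + h)
          - η (ξ - μ) *
            Set.indicator {y : EuclideanSpace ℝ (Fin (d+1)) |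
              Ψ (WithLp.toLp 2 (fun i : Fin d => y i.castSucc)) < y (Fin.last d)} (fun _ => (1:ℝ)) ξ| ^ 2)
          ≤ C * Real.sqrt (1 + MΨ^2) * ‖h‖ := by
  classical
  set κ := (volume (Metric.closedBall (0:EuclideanSpace ℝ (Fin (d+1))) (5/4))).toReal with hκdef
  set κ' := (volume (Metric.closedBall (0:EuclideanSpace ℝ (Fin d)) (5/4))).toReal with hκ'def
  have hκ0 : 0 ≤ κ := ENNReal.toReal_nonneg
  have hκ'0 : 0 ≤ κ' := ENNReal.toReal_nonneg
  refine ⟨8*κ*|C₀| + 6*κ' + 1, by nlinarith [abs_nonneg C₀, mul_nonneg hκ0 (abs_nonneg C₀)], ?_⟩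
  intro η hηsm hηsupp hη01 hηone hηzero hηd Ψ M hM hLip μ h
  have hC₀ : 0 ≤ C₀ := le_trans (norm_nonneg _) (hηd 0)
  rw [abs_of_nonneg hC₀]
  set S : Set (EuclideanSpace ℝ (Fin (d+1))) :=
    {y | Ψ (WithLp.toLp 2 (fun i : Fin d => y i.castSucc)) < y (Fin.last d)} with hSdef
  set r := (M+1)*‖h‖ with hrdef
  have hr : 0 ≤ r := mul_nonneg (by linarith) (norm_nonneg _)
  set m := min 2 (C₀*‖h‖) with hmdef
  have hm0 : 0 ≤ m := le_min (by norm_num) (by positivity)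
  have hm2 : m ≤ 2 := min_le_left _ _
  have hmC : m ≤ C₀*‖h‖ := min_le_right _ _
  set U : Set (EuclideanSpace ℝ (Fin (d+1))) :=
    Metric.closedBall μ (5/4) ∪ Metric.closedBall (μ-h) (5/4) with hUdef
  set W : Set (EuclideanSpace ℝ (Fin (d+1))) :=
    {ξ | hatE ξ ∈ Metric.closedBall (hatE μ) (5/4)
      ∧ |ξ (Fin.last d) - Ψ (hatE ξ)| ≤ r} with hWdef
  -- continuity of Ψ
  have hΨc : Continuous Ψ := by
    have : LipschitzWith (Real.toNNReal M) Ψ := LipschitzWith.of_dist_le_mul (fun x y => by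
      rw [Real.dist_eq, dist_eq_norm, Real.coe_toNNReal _ hM]; exact hLip x y)
    exact this.continuous
  have hUmeas : MeasurableSet U :=
    (measurableSet_closedBall).union measurableSet_closedBall
  have hWmeas : MeasurableSet W := by
    apply MeasurableSet.inter
    · exact (Metric.isClosed_closedBall.preimage hatE_continuous).measurableSet
    · have hc : Continuous fun ξ : EuclideanSpace ℝ (Fin (d+1)) =>
          |ξ (Fin.last d) - Ψ (hatE ξ)| :=
        ((coordE_continuous (Fin.last d)).sub (hΨc.comp hatE_continuous)).abs
      exact (isClosed_le hc continuous_const).measurableSet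
  have hWvol : volume W
      = ENNReal.ofReal (2*r) * volume (Metric.closedBall (hatE μ) (5/4)) :=
    slab_volume d Ψ hΨc (hatE μ) (5/4) r
  have hUfin : volume U < ⊤ :=
    lt_of_le_of_lt (measure_union_le _ _)
      (ENNReal.add_lt_top.mpr ⟨measure_closedBall_lt_top, measure_closedBall_lt_top⟩)
  have hWfin : volume W < ⊤ := by
    rw [hWvol]
    exact ENNReal.mul_lt_top ENNReal.ofReal_lt_top measure_closedBall_lt_top
  -- Lipschitz estimate for η
  have hηLip : ∀ x y : EuclideanSpace ℝ (Fin (d+1)), |η x - η y| ≤ C₀ * ‖x - y‖ := by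
    intro x y
    have := Convex.norm_image_sub_le_of_norm_fderiv_le (𝕜 := ℝ) (f := η)
      (fun z _ => (hηsm.differentiable (by simp)).differentiableAt)
      (fun z _ => hηd z) convex_univ (Set.mem_univ y) (Set.mem_univ x)
    rw [Real.norm_eq_abs] at this
    linarith [this, mul_le_mul_of_nonneg_left (le_refl ‖x - y‖) hC₀]
  -- pointwise bound
  have hpt : ∀ ξ, |η (ξ + h - μ) * S.indicator (fun _ => (1:ℝ)) (ξ + h)
      - η (ξ - μ) * S.indicator (fun _ => (1:ℝ)) ξ| ^ 2
      ≤ (2*m^2) * U.indicator (fun _ => (1:ℝ)) ξ + 2 * W.indicator (fun _ => (1:ℝ)) ξ := by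
    intro ξ
    set a := η (ξ + h - μ) with hadef
    set a' := η (ξ - μ) with ha'def
    set b := S.indicator (fun _ => (1:ℝ)) (ξ + h) with hbdef
    set b' := S.indicator (fun _ => (1:ℝ)) ξ with hb'def
    have hb : b = 0 ∨ b = 1 := by
      by_cases hx : ξ + h ∈ S
      · right; rw [hbdef, Set.indicator_of_mem hx]
      · left; rw [hbdef, Set.indicator_of_notMem hx]
    have hb' : b' = 0 ∨ b' = 1 := by
      by_cases hx : ξ ∈ S
      · right; rw [hb'def, Set.indicator_of_mem hx]
      · left; rw [hb'def, Set.indicator_of_notMem hx]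
    have ha0 : 0 ≤ a := (hη01 _).1
    have ha1 : a ≤ 1 := (hη01 _).2
    have ha'0 : 0 ≤ a' := (hη01 _).1
    have ha'1 : a' ≤ 1 := (hη01 _).2
    have habs : |a - a'| ≤ m := by
      apply le_min
      · rw [abs_le]; constructor <;> linarith
      · have := hηLip (ξ + h - μ) (ξ - μ)
        have he : (ξ + h - μ) - (ξ - μ) = h := by abel
        rw [he] at this
        exact this
    have hdiff_sq : (a - a')^2 ≤ m^2 := by
      have := abs_le.mp habs
      nlinarith [this.1, this.2]
    by_cases hxU : ξ ∈ U
    · rw [Set.indicator_of_mem hxU]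
      by_cases hxW : ξ ∈ W
      · rw [Set.indicator_of_mem hxW]
        rcases hb with hb | hb <;> rcases hb' with hb' | hb' <;>
          rw [hb, hb'] <;> rw [sq_abs] <;> nlinarith [sq_nonneg m]
      · rw [Set.indicator_of_notMem hxW]
        have hbb' : a' = 0 ∨ b = b' := by
          by_cases ha'z : a' = 0
          · exact Or.inl ha'z
          right
          have hnear : ‖ξ - μ‖ ≤ 5/4 := by
            by_contra hgt
            exact ha'z (hηzero _ (le_of_lt (lt_of_not_ge hgt)))
          have hhat : hatE ξ ∈ Metric.closedBall (hatE μ) (5/4) := by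
            rw [Metric.mem_closedBall, dist_eq_norm, ← hatE_sub]
            exact le_trans (hatE_norm_le _) hnear
          have hfar : r < |ξ (Fin.last d) - Ψ (hatE ξ)| := by
            by_contra hle
            exact hxW ⟨hhat, le_of_not_gt hle⟩
          have hAB : |Ψ (hatE ξ) - (Ψ (hatE (ξ+h)) - h (Fin.last d))| ≤ r := by
            have h1 : |Ψ (hatE ξ) - Ψ (hatE (ξ+h))| ≤ M * ‖h‖ := by
              have := hLip (hatE ξ) (hatE (ξ+h))
              have he : hatE ξ - hatE (ξ + h) = -(hatE h) := by
                rw [hatE_add]; abel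
              rw [he, norm_neg] at this
              exact le_trans this (mul_le_mul_of_nonneg_left (hatE_norm_le h) hM)
            have h2 : |h (Fin.last d)| ≤ ‖h‖ := coordE_le h (Fin.last d)
            have he : Ψ (hatE ξ) - (Ψ (hatE (ξ+h)) - h (Fin.last d))
                = (Ψ (hatE ξ) - Ψ (hatE (ξ+h))) + h (Fin.last d) := by ring
            rw [he]
            calc |(Ψ (hatE ξ) - Ψ (hatE (ξ+h))) + h (Fin.last d)|
                ≤ |Ψ (hatE ξ) - Ψ (hatE (ξ+h))| + |h (Fin.last d)| := abs_add_le _ _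
              _ ≤ M * ‖h‖ + ‖h‖ := add_le_add h1 h2
              _ = r := by rw [hrdef]; ring
          have hmem : (ξ + h ∈ S) ↔ (ξ ∈ S) := by
            have hmem1 : (ξ + h ∈ S) ↔ Ψ (hatE (ξ+h)) < ξ (Fin.last d) + h (Fin.last d) :=
              Iff.rfl
            have hmem2 : (ξ ∈ S) ↔ Ψ (hatE ξ) < ξ (Fin.last d) := Iff.rfl
            rw [hmem1, hmem2]
            have habs2 := abs_le.mp hAB
            rcases lt_abs.mp hfar with hc | hc
            · constructor <;> intro _ <;> linarith [habs2.1, habs2.2]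
            · constructor <;> intro hcc <;> linarith [habs2.1, habs2.2]
          rw [hbdef, hb'def]
          by_cases hxS : ξ ∈ S
          · rw [Set.indicator_of_mem hxS, Set.indicator_of_mem (hmem.mpr hxS)]
          · rw [Set.indicator_of_notMem hxS,
              Set.indicator_of_notMem (fun hc => hxS (hmem.mp hc))]
        rcases hbb' with hz | hbe
        · rw [hz]
          rcases hb with hb | hb <;> rw [hb, sq_abs] <;> nlinarith [abs_le.mp habs]
        · rw [hbe]
          rcases hb' with hb' | hb' <;> rw [hb', sq_abs] <;> nlinarith [sq_nonneg m]
    · have hz' : a' = 0 := by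
        apply hηzero
        have : ξ ∉ Metric.closedBall μ (5/4) := fun hc => hxU (Or.inl hc)
        rw [Metric.mem_closedBall, dist_eq_norm] at this
        linarith [lt_of_not_ge this]
      have hz : a = 0 := by
        apply hηzero
        have hξ : ξ ∉ Metric.closedBall (μ - h) (5/4) := fun hc => hxU (Or.inr hc)
        rw [Metric.mem_closedBall, dist_eq_norm] at hξ
        have he : ξ - (μ - h) = ξ + h - μ := by abel
        rw [he] at hξ
        linarith [lt_of_not_ge hξ]
      rw [hz, hz']
      have h1 : (0:ℝ) ≤ U.indicator (fun _ => (1:ℝ)) ξ :=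
        Set.indicator_nonneg (fun _ _ => zero_le_one) _
      have h2 : (0:ℝ) ≤ W.indicator (fun _ => (1:ℝ)) ξ :=
        Set.indicator_nonneg (fun _ _ => zero_le_one) _
      simp only [zero_mul, sub_zero, abs_zero]
      nlinarith [sq_nonneg m]
  -- integrability of the majorant
  have hint1 : Integrable (fun ξ => (2*m^2) * U.indicator (fun _ => (1:ℝ)) ξ) volume := by
    exact (((integrable_indicator_iff hUmeas).mpr
      (integrableOn_const hUfin.ne))).const_mul _
  have hint2 : Integrable (fun ξ => 2 * W.indicator (fun _ => (1:ℝ)) ξ) volume := by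
    exact (((integrable_indicator_iff hWmeas).mpr
      (integrableOn_const hWfin.ne))).const_mul _
  have hintg : Integrable (fun ξ => (2*m^2) * U.indicator (fun _ => (1:ℝ)) ξ
      + 2 * W.indicator (fun _ => (1:ℝ)) ξ) volume := hint1.add hint2
  have key := integral_mono_of_nonneg
    (Filter.Eventually.of_forall (fun ξ => by positivity))
    hintg
    (Filter.Eventually.of_forall hpt)
  have hg : ∫ ξ, ((2*m^2) * U.indicator (fun _ => (1:ℝ)) ξ
      + 2 * W.indicator (fun _ => (1:ℝ)) ξ)
      = 2*m^2*(volume U).toReal + 2*(volume W).toReal := by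
    rw [integral_add hint1 hint2, integral_const_mul, integral_const_mul,
      integral_indicator_const (1:ℝ) hUmeas, integral_indicator_const (1:ℝ) hWmeas]
    simp [smul_eq_mul, Measure.real]
  rw [hg] at key
  -- volume bounds
  have hUvol : (volume U).toReal ≤ 2*κ := by
    have h1 : volume U ≤ volume (Metric.closedBall μ (5/4))
        + volume (Metric.closedBall (μ-h) (5/4)) := measure_union_le _ _
    rw [Measure.addHaar_closedBall_center volume μ,
      Measure.addHaar_closedBall_center volume (μ-h)] at h1
    have h2 := ENNReal.toReal_mono
      (a := volume U)
      (by
        simp only [ne_eq, ENNReal.add_eq_top, not_or]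
        exact ⟨measure_closedBall_lt_top.ne, measure_closedBall_lt_top.ne⟩) h1
    rw [ENNReal.toReal_add measure_closedBall_lt_top.ne measure_closedBall_lt_top.ne] at h2
    rw [hκdef]
    linarith
  have hWvolR : (volume W).toReal = 2*r*κ' := by
    rw [hWvol, Measure.addHaar_closedBall_center volume (hatE μ), ENNReal.toReal_mul,
      ENNReal.toReal_ofReal (by linarith), hκ'def]
  have hsqrt1 : (1:ℝ) ≤ Real.sqrt (1 + M^2) := by
    have h1 := Real.sqrt_le_sqrt (show (1:ℝ) ≤ 1 + M^2 by nlinarith)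
    rwa [Real.sqrt_one] at h1
  have hM1 : M + 1 ≤ 1.5 * Real.sqrt (1 + M^2) := by
    have h2 : Real.sqrt ((M+1)^2) = M + 1 := Real.sqrt_sq (by linarith)
    have h3 : Real.sqrt ((M+1)^2) ≤ Real.sqrt ((1.5)^2 * (1 + M^2)) :=
      Real.sqrt_le_sqrt (by nlinarith [sq_nonneg (M-1), hM])
    rw [h2, Real.sqrt_mul (by positivity), Real.sqrt_sq (by norm_num)] at h3
    exact h3
  have hsq : m^2 ≤ 2*(C₀*‖h‖) := by nlinarith [hm0, hm2, hmC]
  have htU0 : (0:ℝ) ≤ (volume U).toReal := ENNReal.toReal_nonneg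
  have hCh : (0:ℝ) ≤ C₀*‖h‖ := by positivity
  have A1 : 2*m^2*(volume U).toReal ≤ 8*κ*(C₀*‖h‖) := by
    nlinarith [hsq, hUvol, htU0, hCh, hκ0, sq_nonneg m]
  have A2 : 2*(volume W).toReal ≤ 6*κ'*(Real.sqrt (1 + M^2)*‖h‖) := by
    rw [hWvolR, hrdef]
    nlinarith [hM1, mul_nonneg hκ'0 (norm_nonneg h), hκ'0, norm_nonneg h]
  have B1 : 8*κ*(C₀*‖h‖) ≤ 8*κ*C₀*(Real.sqrt (1 + M^2)*‖h‖) := by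
    nlinarith [mul_nonneg (mul_nonneg hκ0 hC₀) (norm_nonneg h), hsqrt1]
  have B2 : (0:ℝ) ≤ Real.sqrt (1 + M^2)*‖h‖ := by positivity
  calc ∫ ξ, |η (ξ + h - μ) * S.indicator (fun _ => (1:ℝ)) (ξ + h)
        - η (ξ - μ) * S.indicator (fun _ => (1:ℝ)) ξ| ^ 2
      ≤ 2*m^2*(volume U).toReal + 2*(volume W).toReal := key
    _ ≤ (8*κ*C₀ + 6*κ' + 1) * Real.sqrt (1 + M^2) * ‖h‖ := by nlinarith [A1, A2, B1, B2]
end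

section
/- Let φ ∈ C³([−2ρ, 2ρ]) and δ ∈ (0,1). For s ∈ (−2ρ, 2ρ), let 𝔛₁(s) = {t ∈ (−2ρ,2ρ) : φ(t) = s}, which is finite for a.e. s; for finite nonempty 𝔛 with elements ξ₁<…<ξ_N, set m_δ(𝔛) = Σ_j ρ_j^{−δ} where ρ_j = dist(ξ_j, 𝔛∖{ξ_j}) for N ≥ 2, ρ₁ = 4ρ for N = 1, and m_δ(∅) = (4ρ)^{−δ}. Then ∫_{−2ρ}^{2ρ} m_δ(𝔛₁(s)) ds ≤ C_δ ρ^{1−δ} (1 + ρ ‖φ″‖_∞), with C_δ depending only on δ. -/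
/-!
If `ξ ≠ η` lie on the same level of `φ`, Rolle's theorem gives a zero of `φ'` between them, so
`|φ'(ξ)| ≤ M |ξ - η|` with `M = ‖φ''‖_∞`. Hence, for every non-critical value `s` (all but a null
set, by Sard), each point `ξ` of a level set with at least two points has spacing
`ρ_ξ ≥ |φ'(ξ)| / M` and satisfies `|φ'(ξ)| ≤ 4ρM`, so
`m_δ(𝔛₁(s)) ≤ (4ρ)^{-δ} + M^δ Σ_{ξ ∈ 𝔛₁(s)} |φ'(ξ)|^{-δ}`.
On each connected component of `{φ' ≠ 0}` the function `φ` is injective, and the change of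
variables formula turns the integral over `s` of the sum into `M^δ ∫ |φ'|^{1-δ} ≤ 4ρM (4ρ)^{1-δ}`.
-/

open scoped Classical

open MeasureTheory

/-- Infinite sets get the junk value `0`. -/
noncomputable def mdelta (ρ δ : ℝ) (X : Set ℝ) : ℝ :=
  if hX : X.Finite then
    if X.Subsingleton then (4*ρ) ^ (-δ)
    else ∑ ξ ∈ hX.toFinset, (Metric.infDist ξ (X \ {ξ})) ^ (-δ)
  else 0

open Set Function
open scoped ENNReal NNReal

section ConnectedComponents

variable {X : Type*} [TopologicalSpace X]

theorem pairwiseDisjoint_connectedComponentIn_image (U : Set X) :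
    (connectedComponentIn U '' U).PairwiseDisjoint id := by
  rintro _ ⟨x, -, rfl⟩ _ ⟨y, -, rfl⟩ hne
  exact disjoint_left.2 fun z hzx hzy =>
    hne ((connectedComponentIn_eq hzx).trans (connectedComponentIn_eq hzy).symm)

theorem biUnion_connectedComponentIn_image (U : Set X) :
    ⋃ C ∈ connectedComponentIn U '' U, C = U := by
  rw [biUnion_image]
  exact Subset.antisymm (iUnion₂_subset fun x _ => connectedComponentIn_subset U x)
    fun x hx => mem_biUnion hx (mem_connectedComponentIn hx)

theorem IsOpen.countable_connectedComponentIn_image [LocallyConnectedSpace X]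
    [TopologicalSpace.SeparableSpace X] {U : Set X} (hU : IsOpen U) :
    (connectedComponentIn U '' U).Countable :=
  (pairwiseDisjoint_connectedComponentIn_image U).countable_of_isOpen
    (by rintro _ ⟨x, -, rfl⟩; exact hU.connectedComponentIn)
    (by rintro _ ⟨x, hx, rfl⟩; exact ⟨x, mem_connectedComponentIn hx⟩)

end ConnectedComponents

section Rolle

variable {f f' : ℝ → ℝ} {s : Set ℝ}

theorem Set.OrdConnected.exists_hasDerivAt_eq_zero (hs : s.OrdConnected)
    (hf : ∀ t ∈ s, HasDerivAt f (f' t) t) {x y : ℝ} (hx : x ∈ s) (hy : y ∈ s) (hxy : x ≠ y)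
    (hfxy : f x = f y) : ∃ c ∈ uIcc x y, f' c = 0 := by
  wlog hlt : x < y generalizing x y
  · rw [uIcc_comm]
    exact this hy hx hxy.symm hfxy.symm (lt_of_le_of_ne (not_lt.1 hlt) hxy.symm)
  have hsub : Icc x y ⊆ s := hs.out hx hy
  obtain ⟨c, hc, hc0⟩ := _root_.exists_hasDerivAt_eq_zero hlt
    (fun t ht => (hf t (hsub ht)).continuousAt.continuousWithinAt) hfxy
    (fun t ht => hf t (hsub (Ioo_subset_Icc_self ht)))
  exact ⟨c, uIcc_of_le hlt.le ▸ Ioo_subset_Icc_self hc, hc0⟩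

theorem Set.OrdConnected.injOn_of_hasDerivAt_ne_zero (hs : s.OrdConnected)
    (hf : ∀ t ∈ s, HasDerivAt f (f' t) t) (hf' : ∀ t ∈ s, f' t ≠ 0) : InjOn f s := by
  intro x hx y hy hfxy
  by_contra hxy
  obtain ⟨c, hc, hc0⟩ := hs.exists_hasDerivAt_eq_zero hf hx hy hxy hfxy
  exact hf' c (hs.uIcc_subset hx hy hc) hc0

end Rolle

section FiberSums

variable {f f' : ℝ → ℝ} {s : Set ℝ} (g : ℝ → ℝ≥0∞)

theorem tsum_fiber_apply_of_injOn (hf : InjOn f s) {x : ℝ} (hx : x ∈ s) :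
    ∑' z : {z | z ∈ s ∧ f z = f x}, g z = g x := by
  have hfiber : {z | z ∈ s ∧ f z = f x} = {x} :=
    Subset.antisymm (fun z hz => hf hz.1 hx hz.2) (singleton_subset_iff.2 ⟨hx, rfl⟩)
  rw [hfiber, tsum_singleton]

theorem tsum_fiber_of_notMem_image {y : ℝ} (hy : y ∉ f '' s) :
    ∑' z : {z | z ∈ s ∧ f z = y}, g z = 0 := by
  have hfiber : {z | z ∈ s ∧ f z = y} = ∅ :=
    eq_empty_of_forall_notMem fun z hz => hy ⟨z, hz⟩
  rw [hfiber, tsum_empty]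

theorem tsum_fiber_eq_extend (hf : InjOn f s) (y : ℝ) :
    ∑' z : {z | z ∈ s ∧ f z = y}, g z = extend (s.domRestrict f) (g ∘ (↑)) 0 y := by
  by_cases hy : ∃ x : s, s.domRestrict f x = y
  · obtain ⟨x, rfl⟩ := hy
    rw [hf.injective.extend_apply]
    exact tsum_fiber_apply_of_injOn g hf x.2
  · rw [extend_apply' _ _ _ hy]
    exact tsum_fiber_of_notMem_image g fun ⟨x, hx, hfx⟩ => hy ⟨⟨x, hx⟩, hfx⟩

theorem measurable_tsum_fiber_of_injOn (hs : MeasurableSet s)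
    (hf' : ∀ x ∈ s, HasDerivWithinAt f (f' x) s x) (hf : InjOn f s) (hg : Measurable g) :
    Measurable fun y => ∑' z : {z | z ∈ s ∧ f z = y}, g z := by
  simp_rw [tsum_fiber_eq_extend g hf]
  exact (measurableEmbedding_of_fderivWithin hs (fun x hx => (hf' x hx).hasFDerivWithinAt)
    hf).measurable_extend (hg.comp measurable_subtype_coe) measurable_const

theorem lintegral_tsum_fiber_of_injOn (hs : MeasurableSet s)
    (hf' : ∀ x ∈ s, HasDerivWithinAt f (f' x) s x) (hf : InjOn f s) :
    ∫⁻ y, ∑' z : {z | z ∈ s ∧ f z = y}, g z = ∫⁻ x in s, ENNReal.ofReal |f' x| * g x := by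
  have hsupp : support (fun y => ∑' z : {z | z ∈ s ∧ f z = y}, g z) ⊆ f '' s := fun y hy =>
    not_not.1 fun h => hy (tsum_fiber_of_notMem_image g h)
  rw [← setLIntegral_eq_of_support_subset hsupp,
    lintegral_image_eq_lintegral_abs_deriv_mul hs hf' hf]
  exact setLIntegral_congr_fun hs fun x hx => by rw [tsum_fiber_apply_of_injOn g hf hx]

end FiberSums

theorem IsOpen.lintegral_tsum_fiber_le {f f' : ℝ → ℝ} {U : Set ℝ} (hU : IsOpen U)
    (hf : ∀ x ∈ U, HasDerivAt f (f' x) x) (hf' : ∀ x ∈ U, f' x ≠ 0) {g : ℝ → ℝ≥0∞}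
    (hg : Measurable g) :
    ∫⁻ y, ∑' z : {z | z ∈ U ∧ f z = y}, g z ≤ ∫⁻ x in U, ENNReal.ofReal |f' x| * g x := by
  set S := connectedComponentIn U '' U
  have hSc : S.Countable := hU.countable_connectedComponentIn_image
  have hSU : ∀ C ∈ S, C ⊆ U := by
    rintro _ ⟨x, -, rfl⟩; exact connectedComponentIn_subset U x
  have hSm : ∀ C ∈ S, MeasurableSet C := by
    rintro _ ⟨x, -, rfl⟩; exact hU.connectedComponentIn.measurableSet
  have hSf : ∀ C ∈ S, ∀ x ∈ C, HasDerivWithinAt f (f' x) C x :=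
    fun C hC x hx => (hf x (hSU C hC hx)).hasDerivWithinAt
  have hSinj : ∀ C ∈ S, InjOn f C := by
    rintro _ ⟨x, -, rfl⟩
    exact isPreconnected_connectedComponentIn.ordConnected.injOn_of_hasDerivAt_ne_zero
      (fun t ht => hf t (connectedComponentIn_subset U x ht))
      (fun t ht => hf' t (connectedComponentIn_subset U x ht))
  have hfiber : ∀ y, ∑' z : {z | z ∈ U ∧ f z = y}, g z ≤
      ∑' C : S, ∑' z : {z | z ∈ (C : Set ℝ) ∧ f z = y}, g z := fun y =>
    (ENNReal.tsum_mono_subtype g (t := ⋃ C : S, {z | z ∈ (C : Set ℝ) ∧ f z = y})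
      fun z hz => mem_iUnion.2
        ⟨⟨_, mem_image_of_mem _ hz.1⟩, mem_connectedComponentIn hz.1, hz.2⟩).trans
    (ENNReal.tsum_iUnion_le_tsum g _)
  have := hSc.to_subtype
  calc ∫⁻ y, ∑' z : {z | z ∈ U ∧ f z = y}, g z
      ≤ ∫⁻ y, ∑' C : S, ∑' z : {z | z ∈ (C : Set ℝ) ∧ f z = y}, g z := lintegral_mono hfiber
    _ = ∑' C : S, ∫⁻ y, ∑' z : {z | z ∈ (C : Set ℝ) ∧ f z = y}, g z :=
      lintegral_tsum fun C =>
        (measurable_tsum_fiber_of_injOn g (hSm C C.2) (hSf C C.2) (hSinj C C.2) hg).aemeasurable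
    _ = ∑' C : S, ∫⁻ x in C, ENNReal.ofReal |f' x| * g x := by
      congr with C
      exact lintegral_tsum_fiber_of_injOn g (hSm C C.2) (hSf C C.2) (hSinj C C.2)
    _ = ∫⁻ x in U, ENNReal.ofReal |f' x| * g x := by
      rw [← lintegral_biUnion hSc hSm (pairwiseDisjoint_connectedComponentIn_image U),
        biUnion_connectedComponentIn_image]

theorem volume_image_eq_zero_of_hasDerivWithinAt_eq_zero {f f' : ℝ → ℝ} {s : Set ℝ}
    (hf : ∀ x ∈ s, HasDerivWithinAt f (f' x) s x) (hf' : ∀ x ∈ s, f' x = 0) :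
    volume (f '' s) = 0 :=
  addHaar_image_eq_zero_of_det_fderivWithin_eq_zero volume
    (fun x hx => (hf x hx).hasFDerivWithinAt) fun x hx => by
      rw [ContinuousLinearMap.det_toSpanSingleton, hf' x hx]

theorem abs_deriv_le_mul_dist_of_eq {f D : ℝ → ℝ} {s : Set ℝ} {K : ℝ≥0} (hs : s.OrdConnected)
    (hf : ∀ t ∈ s, HasDerivAt f (D t) t) (hD : LipschitzOnWith K D s) {x y : ℝ} (hx : x ∈ s)
    (hy : y ∈ s) (hxy : x ≠ y) (hfxy : f x = f y) : |D x| ≤ K * dist x y := by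
  obtain ⟨c, hc, hc0⟩ := hs.exists_hasDerivAt_eq_zero hf hx hy hxy hfxy
  calc |D x| = dist (D x) (D c) := by rw [Real.dist_eq, hc0, sub_zero]
    _ ≤ K * dist x c := hD.dist_le_mul x hx c (hs.uIcc_subset hx hy hc)
    _ ≤ K * dist x y := by gcongr; exact Real.dist_left_le_of_mem_uIcc hc

theorem rpow_neg_le_mul_rpow_neg {u d K δ : ℝ} (hu : 0 < u) (hd : 0 ≤ d) (hK : 0 ≤ K)
    (h : u ≤ K * d) (hδ : 0 ≤ δ) : d ^ (-δ) ≤ K ^ δ * u ^ (-δ) := by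
  have hKd : 0 < K * d := hu.trans_le h
  have hK' : 0 < K := pos_of_mul_pos_left hKd hd
  calc d ^ (-δ) ≤ (u / K) ^ (-δ) :=
        Real.rpow_le_rpow_of_nonpos (by positivity) ((div_le_iff₀' hK').2 h) (by linarith)
    _ = K ^ δ * u ^ (-δ) := by
      rw [Real.div_rpow hu.le hK, Real.rpow_neg hK, div_inv_eq_mul, mul_comm]

theorem mul_mul_rpow_neg_le {u r K δ : ℝ} (hu : 0 ≤ u) (hr : 0 ≤ r) (hK : 0 ≤ K)
    (h : u ≤ r * K) (hδ : δ ≤ 1) : u * (K ^ δ * u ^ (-δ)) ≤ K * r ^ (1 - δ) := by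
  rcases hu.eq_or_lt with rfl | hu
  · rw [zero_mul]; positivity
  calc u * (K ^ δ * u ^ (-δ)) = K ^ δ * u ^ (1 - δ) := by
        rw [sub_eq_add_neg, Real.rpow_add hu, Real.rpow_one]; ring
    _ ≤ K ^ δ * (r * K) ^ (1 - δ) := by gcongr
    _ = K * r ^ (1 - δ) := by
      rw [Real.mul_rpow hr hK, mul_left_comm, ← Real.rpow_add' hK (by norm_num), add_sub_cancel,
        Real.rpow_one, mul_comm]

theorem mdelta_nonneg {ρ : ℝ} (hρ : 0 ≤ ρ) (δ : ℝ) (X : Set ℝ) : 0 ≤ mdelta ρ δ X := by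
  unfold mdelta
  split_ifs
  · positivity
  · exact Finset.sum_nonneg fun ξ _ => Real.rpow_nonneg Metric.infDist_nonneg _
  · exact le_rfl

theorem ofReal_mdelta_le (ρ δ : ℝ) {X : Set ℝ} (w : ℝ → ℝ≥0∞)
    (hw : ∀ ξ ∈ X, X.Finite → ¬X.Subsingleton →
      ENNReal.ofReal (Metric.infDist ξ (X \ {ξ}) ^ (-δ)) ≤ w ξ) :
    ENNReal.ofReal (mdelta ρ δ X) ≤ ENNReal.ofReal ((4 * ρ) ^ (-δ)) + ∑' ξ : X, w ξ := by
  unfold mdelta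
  split_ifs with hfin hsub
  · exact le_self_add
  · refine le_add_left ?_
    rw [ENNReal.ofReal_sum_of_nonneg fun ξ _ => Real.rpow_nonneg Metric.infDist_nonneg _]
    calc ∑ ξ ∈ hfin.toFinset, ENNReal.ofReal (Metric.infDist ξ (X \ {ξ}) ^ (-δ))
        ≤ ∑ ξ ∈ hfin.toFinset, w ξ :=
          Finset.sum_le_sum fun ξ hξ => hw ξ (hfin.mem_toFinset.1 hξ) hfin hsub
      _ = ∑' ξ : X, w ξ := by
        rw [tsum_subtype, tsum_eq_sum (s := hfin.toFinset)]
        · exact Finset.sum_congr rfl fun ξ hξ => (indicator_of_mem (hfin.mem_toFinset.1 hξ) w).symm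
        · exact fun ξ hξ => indicator_of_notMem (fun h => hξ (hfin.mem_toFinset.2 h)) w
  · simp

theorem intervalIntegral_le_of_lintegral_le {f : ℝ → ℝ} {a b B : ℝ} (hab : a ≤ b)
    (hf : ∀ x, 0 ≤ f x) (hB : 0 ≤ B)
    (h : ∫⁻ x in Ioc a b, ENNReal.ofReal (f x) ≤ ENNReal.ofReal B) :
    ∫ x in a..b, f x ≤ B := by
  rw [intervalIntegral.integral_of_le hab]
  refine (le_abs_self _).trans ((norm_integral_le_lintegral_norm f).trans
    (ENNReal.toReal_le_of_le_ofReal hB ?_))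
  simpa only [Real.norm_eq_abs, abs_of_nonneg (hf _)] using h

/-- The cutoff `|D x| ≤ L` costs nothing at points of level sets with at least two points
(for `L = 4ρK`), and it keeps `∫ |D| w` finite. -/
noncomputable def cutoffWeight (D : ℝ → ℝ) (K L δ : ℝ) (x : ℝ) : ℝ≥0∞ :=
  if |D x| ≤ L then ENNReal.ofReal (K ^ δ * |D x| ^ (-δ)) else 0

theorem measurable_cutoffWeight {D : ℝ → ℝ} (hD : Measurable D) (K L δ : ℝ) :
    Measurable (cutoffWeight D K L δ) :=
  Measurable.ite (measurableSet_le hD.abs measurable_const)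
    (measurable_const.mul (hD.abs.pow_const _)).ennreal_ofReal measurable_const

theorem ofReal_abs_mul_cutoffWeight_le (D : ℝ → ℝ) {K r δ : ℝ} (hK : 0 ≤ K) (hr : 0 ≤ r)
    (hδ : δ ≤ 1) (x : ℝ) :
    ENNReal.ofReal |D x| * cutoffWeight D K (r * K) δ x ≤ ENNReal.ofReal (K * r ^ (1 - δ)) := by
  unfold cutoffWeight
  split_ifs with hx
  · rw [← ENNReal.ofReal_mul (abs_nonneg _)]
    exact ENNReal.ofReal_le_ofReal (mul_mul_rpow_neg_le (abs_nonneg _) hr hK hx hδ)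
  · simp

theorem ofReal_mdelta_levelSet_le {φ D : ℝ → ℝ} {a b ρ δ : ℝ} {K : ℝ≥0} (hba : b - a = 4 * ρ)
    (hδ : 0 ≤ δ) (hφ : ∀ t ∈ Ioo a b, HasDerivAt φ (D t) t) (hD : LipschitzOnWith K D (Ioo a b))
    {s : ℝ} (hs : ∀ t ∈ Ioo a b, φ t = s → D t ≠ 0) :
    ENNReal.ofReal (mdelta ρ δ {t | t ∈ Ioo a b ∧ φ t = s}) ≤ ENNReal.ofReal ((4 * ρ) ^ (-δ)) +
      ∑' ξ : {t | t ∈ Ioo a b ∧ φ t = s}, cutoffWeight D K (4 * ρ * K) δ ξ := by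
  set X := {t | t ∈ Ioo a b ∧ φ t = s}
  refine ofReal_mdelta_le ρ δ _ fun ξ hξ hfin hsub => ?_
  obtain ⟨η, hη, hηξ⟩ := (not_subsingleton_iff.1 hsub).exists_ne ξ
  obtain ⟨η, ⟨hηX, hηξ⟩, hdist⟩ :=
    (hfin.sdiff (t := {ξ})).isCompact.exists_infDist_eq_dist ⟨η, hη, hηξ⟩ ξ
  have hDξ : 0 < |D ξ| := abs_pos.2 (hs ξ hξ.1 hξ.2)
  have hle : |D ξ| ≤ K * Metric.infDist ξ (X \ {ξ}) := hdist ▸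
    abs_deriv_le_mul_dist_of_eq ordConnected_Ioo hφ hD hξ.1 hηX.1 (Ne.symm hηξ)
      (hξ.2.trans hηX.2.symm)
  have hd : Metric.infDist ξ (X \ {ξ}) ≤ 4 * ρ := by
    rw [hdist, Real.dist_eq, ← hba, abs_le]
    constructor <;> linarith [hξ.1.1, hξ.1.2, hηX.1.1, hηX.1.2]
  rw [cutoffWeight, if_pos (hle.trans (by rw [mul_comm (4 * ρ)]; gcongr))]
  exact ENNReal.ofReal_le_ofReal (rpow_neg_le_mul_rpow_neg hDξ Metric.infDist_nonneg K.2 hle hδ)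

theorem lintegral_mdelta_levelSet_le {φ D : ℝ → ℝ} {a b ρ δ : ℝ} {K : ℝ≥0} (hρ : 0 < ρ)
    (hba : b - a = 4 * ρ) (hδ₀ : 0 ≤ δ) (hδ₁ : δ ≤ 1) (hφ : ∀ t ∈ Ioo a b, HasDerivAt φ (D t) t)
    (hDm : Measurable D) (hD : LipschitzOnWith K D (Ioo a b)) :
    ∫⁻ s in Ioc a b, ENNReal.ofReal (mdelta ρ δ {t | t ∈ Ioo a b ∧ φ t = s}) ≤
      ENNReal.ofReal ((4 * ρ) ^ (1 - δ) * (1 + 4 * ρ * K)) := by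
  set U := Ioo a b ∩ D ⁻¹' {0}ᶜ
  set w := cutoffWeight D K (4 * ρ * K) δ
  have hcrit : ∀ᵐ s, s ∉ φ '' (Ioo a b \ U) :=
    measure_eq_zero_iff_ae_notMem.1 <| volume_image_eq_zero_of_hasDerivWithinAt_eq_zero
      (fun x hx => (hφ x hx.1).hasDerivWithinAt) fun x hx => not_not.1 fun h => hx.2 ⟨hx.1, h⟩
  have hpt : ∀ s ∉ φ '' (Ioo a b \ U),
      ENNReal.ofReal (mdelta ρ δ {t | t ∈ Ioo a b ∧ φ t = s}) ≤
        ENNReal.ofReal ((4 * ρ) ^ (-δ)) + ∑' z : {z | z ∈ U ∧ φ z = s}, w z := by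
    intro s hs
    have hreg : ∀ t ∈ Ioo a b, φ t = s → D t ≠ 0 := fun t ht hts h0 =>
      hs ⟨t, ⟨ht, fun htU => htU.2 h0⟩, hts⟩
    exact (ofReal_mdelta_levelSet_le hba hδ₀ hφ hD hreg).trans <| add_le_add le_rfl <|
      ENNReal.tsum_mono_subtype w fun t ht => ⟨⟨ht.1, hreg t ht.1 ht.2⟩, ht.2⟩
  have hU : IsOpen U := hD.continuousOn.isOpen_inter_preimage isOpen_Ioo isOpen_compl_singleton
  calc ∫⁻ s in Ioc a b, ENNReal.ofReal (mdelta ρ δ {t | t ∈ Ioo a b ∧ φ t = s})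
      ≤ ∫⁻ s in Ioc a b, (ENNReal.ofReal ((4 * ρ) ^ (-δ)) +
          ∑' z : {z | z ∈ U ∧ φ z = s}, w z) :=
        lintegral_mono_ae (ae_restrict_of_ae (hcrit.mono hpt))
    _ ≤ ENNReal.ofReal ((4 * ρ) ^ (-δ)) * ENNReal.ofReal (4 * ρ) +
          ∫⁻ s, ∑' z : {z | z ∈ U ∧ φ z = s}, w z := by
        rw [lintegral_add_left measurable_const, setLIntegral_const, Real.volume_Ioc, hba]
        gcongr
        exact Measure.restrict_le_self
    _ ≤ ENNReal.ofReal ((4 * ρ) ^ (-δ)) * ENNReal.ofReal (4 * ρ) +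
          ∫⁻ x in U, ENNReal.ofReal |D x| * w x :=
        add_le_add le_rfl <| hU.lintegral_tsum_fiber_le (fun x hx => hφ x hx.1)
          (fun x hx => hx.2) (measurable_cutoffWeight hDm _ _ _)
    _ ≤ ENNReal.ofReal ((4 * ρ) ^ (-δ)) * ENNReal.ofReal (4 * ρ) +
          ENNReal.ofReal (K * (4 * ρ) ^ (1 - δ)) * ENNReal.ofReal (4 * ρ) := by
        gcongr
        calc ∫⁻ x in U, ENNReal.ofReal |D x| * w x
            ≤ ∫⁻ x in U, ENNReal.ofReal (K * (4 * ρ) ^ (1 - δ)) :=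
              lintegral_mono (ofReal_abs_mul_cutoffWeight_le D K.2 (by positivity) hδ₁)
          _ ≤ ENNReal.ofReal (K * (4 * ρ) ^ (1 - δ)) * ENNReal.ofReal (4 * ρ) := by
            rw [setLIntegral_const, ← hba, ← Real.volume_Ioo]
            gcongr
            exact inter_subset_left
    _ = ENNReal.ofReal ((4 * ρ) ^ (1 - δ) * (1 + 4 * ρ * K)) := by
        have h4ρ : 0 < 4 * ρ := by positivity
        rw [← ENNReal.ofReal_mul (by positivity), ← ENNReal.ofReal_mul (by positivity),
          ← ENNReal.ofReal_add (by positivity) (by positivity), sub_eq_neg_add,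
          Real.rpow_add h4ρ, Real.rpow_one]
        ring_nf

theorem lipschitzOnWith_deriv_of_abs_iteratedDerivWithin_two_le {φ : ℝ → ℝ} {a b M : ℝ}
    (hab : a < b) (hφ : ContDiffOn ℝ 2 φ (Icc a b))
    (hM : ∀ t ∈ Icc a b, |iteratedDerivWithin 2 φ (Icc a b) t| ≤ M) :
    LipschitzOnWith M.toNNReal (deriv φ) (Ioo a b) := by
  have hD : DifferentiableOn ℝ (derivWithin φ (Icc a b)) (Icc a b) :=
    (hφ.derivWithin (m := 1) (uniqueDiffOn_Icc hab) (by norm_num)).differentiableOn (by norm_num)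
  have hD' : ∀ t ∈ Icc a b, ‖derivWithin (derivWithin φ (Icc a b)) (Icc a b) t‖₊ ≤ M.toNNReal := by
    intro t ht
    have := hM t ht
    rw [iteratedDerivWithin_succ', iteratedDerivWithin_one] at this
    rw [← NNReal.coe_le_coe, coe_nnnorm, Real.norm_eq_abs, Real.coe_toNNReal']
    exact this.trans (le_max_left _ _)
  have hL := ((convex_Icc a b).lipschitzOnWith_of_nnnorm_derivWithin_le hD hD').mono
    Ioo_subset_Icc_self
  intro x hx y hy
  rw [← derivWithin_of_mem_nhds (Icc_mem_nhds hx.1 hx.2),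
    ← derivWithin_of_mem_nhds (Icc_mem_nhds hy.1 hy.2)]
  exact hL hx hy

theorem four_mul_rpow_mul_one_add_le {ρ M δ : ℝ} (hρ : 0 ≤ ρ) (hM : 0 ≤ M) (hδ : 0 ≤ δ) :
    (4 * ρ) ^ (1 - δ) * (1 + 4 * ρ * M) ≤ 16 * ρ ^ (1 - δ) * (1 + ρ * M) := by
  have h4 : (4 : ℝ) ^ (1 - δ) ≤ 4 :=
    Real.rpow_le_self_of_one_le (by norm_num) (by linarith)
  rw [Real.mul_rpow (by norm_num) hρ]
  have := Real.rpow_nonneg hρ (1 - δ)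
  nlinarith [mul_nonneg hρ hM, mul_nonneg this (mul_nonneg hρ hM)]

/-- Widom's one-dimensional spacing estimate for level sets of a `C³`
function, for `δ ∈ (0,1)`. -/
theorem stmt_10 (δ : ℝ) (hδ : δ ∈ Set.Ioo (0:ℝ) 1) :
    ∃ C > 0, ∀ ρ : ℝ, 0 < ρ → ∀ φ : ℝ → ℝ,
      ContDiffOn ℝ 3 φ (Set.Icc (-(2*ρ)) (2*ρ)) →
      ∀ M2 : ℝ,
        (∀ t ∈ Set.Icc (-(2*ρ)) (2*ρ),
          |iteratedDerivWithin 2 φ (Set.Icc (-(2*ρ)) (2*ρ)) t| ≤ M2) →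
        (∫ s in (-(2*ρ))..(2*ρ),
            mdelta ρ δ {t | t ∈ Set.Ioo (-(2*ρ)) (2*ρ) ∧ φ t = s})
          ≤ C * ρ ^ (1-δ) * (1 + ρ * M2) := by
  obtain ⟨hδ₀, hδ₁⟩ := hδ
  refine ⟨16, by norm_num, fun ρ hρ φ hφ M2 hM2 => ?_⟩
  have hab : -(2 * ρ) < 2 * ρ := by linarith
  have hM2₀ : 0 ≤ M2 := (abs_nonneg _).trans (hM2 0 ⟨by linarith, by linarith⟩)
  have hderiv : ∀ t ∈ Ioo (-(2 * ρ)) (2 * ρ), HasDerivAt φ (deriv φ t) t := fun t ht =>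
    ((hφ.differentiableOn (by norm_num) t (Ioo_subset_Icc_self ht)).differentiableAt
      (Icc_mem_nhds ht.1 ht.2)).hasDerivAt
  have hlint := lintegral_mdelta_levelSet_le hρ (by ring) hδ₀.le hδ₁.le hderiv
    (measurable_deriv φ)
    (lipschitzOnWith_deriv_of_abs_iteratedDerivWithin_two_le hab (hφ.of_le (by norm_num)) hM2)
  rw [Real.coe_toNNReal _ hM2₀] at hlint
  exact (intervalIntegral_le_of_lintegral_le hab.le (fun s => mdelta_nonneg hρ.le δ _)
    (by positivity) hlint).trans (four_mul_rpow_mul_one_add_le hρ.le hM2₀ hδ₀.le)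
end

section
/- Let F ∈ C¹(ℝ^{d−1}) and fix l ∈ {1,…,d−1} (l < d). Let S = {x ∈ ℝ^d : x_l = F(x°)} where x° = (x₁,…,x_{l−1}, x_{l+1},…,x_d), with continuous unit normal n_S(x) = (−∂₁F,…,−∂_{l−1}F, 1, −∂_{l+1}F,…,−∂_dF)/√(1+|∇F|²) evaluated at x°. For x̂ = (x₁,…,x_{d−1}) let 𝔛(x̂) = {x_d ∈ ℝ : F(x°) = x_l}. Then for any f ∈ C_0^∞(ℝ^d), ∫_{ℝ^{d−1}} Σ_{x_d ∈ 𝔛(x̂)} f(x°, F(x°)) dx̂ = ∫_S |n_S(x)·e_d| f(x) dS_x, where (x°, F(x°)) denotes the point x with x_l = F(x°), e_d is the d-th coordinate unit vector, and dS_x is the surface measure on S. -/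
open MeasureTheory

open Set Function ENNReal NNReal


theorem loc_inj {m : ℕ} {Φ : (Fin m → ℝ) → (Fin m → ℝ)} (hΦ : ContDiff ℝ 1 Φ)
    (y : Fin m → ℝ) (hy : (fderiv ℝ Φ y).det ≠ 0) :
    ∃ V : Set (Fin m → ℝ), IsOpen V ∧ y ∈ V ∧ InjOn Φ V := by
  have hstrict : HasStrictFDerivAt Φ (fderiv ℝ Φ y) y :=
    hΦ.contDiffAt.hasStrictFDerivAt one_ne_zero
  set A := fderiv ℝ Φ y with hA
  have hdet : LinearMap.det (A : (Fin m → ℝ) →ₗ[ℝ] (Fin m → ℝ)) ≠ 0 := hy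
  let Aeq : (Fin m → ℝ) ≃L[ℝ] (Fin m → ℝ) :=
    (LinearMap.equivOfDetNeZero _ hdet).toContinuousLinearEquiv
  have hAeq : (Aeq : (Fin m → ℝ) →L[ℝ] (Fin m → ℝ)) = A := by
    ext x
    simp [Aeq, LinearMap.equivOfDetNeZero]
  have hst : HasStrictFDerivAt Φ (Aeq : (Fin m → ℝ) →L[ℝ] (Fin m → ℝ)) y := by
    rw [hAeq]; exact hstrict
  exact ⟨(HasStrictFDerivAt.toOpenPartialHomeomorph Φ hst).source,
    (HasStrictFDerivAt.toOpenPartialHomeomorph Φ hst).open_source,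
    HasStrictFDerivAt.mem_toOpenPartialHomeomorph_source hst,
    (HasStrictFDerivAt.toOpenPartialHomeomorph Φ hst).injOn⟩

theorem area_formula {m : ℕ} {Φ : (Fin m → ℝ) → (Fin m → ℝ)} (hΦ : ContDiff ℝ 1 Φ)
    {h : (Fin m → ℝ) → ℝ} (hh : Continuous h) (hco : HasCompactSupport h) :
    ∫ x, ∑' y : ↥(Φ ⁻¹' {x}), h (y : Fin m → ℝ) = ∫ y, |(fderiv ℝ Φ y).det| * h y := by
  classical
  have hd : Differentiable ℝ Φ := hΦ.differentiable one_ne_zero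
  have hdc : Continuous fun y => (fderiv ℝ Φ y).det :=
    ContinuousLinearMap.continuous_det.comp (hΦ.continuous_fderiv one_ne_zero)
  set U : Set (Fin m → ℝ) := {y | (fderiv ℝ Φ y).det ≠ 0} with hU
  have hUopen : IsOpen U := isOpen_compl_singleton.preimage hdc
  -- countable cover of U by open sets on which Φ is injective
  have loc : ∀ y : ↥U, ∃ V : Set (Fin m → ℝ), IsOpen V ∧ (y : Fin m → ℝ) ∈ V ∧ V ⊆ U ∧
      InjOn Φ V := by
    rintro ⟨y, hy⟩
    obtain ⟨V, hVo, hVy, hVinj⟩ := loc_inj hΦ y hy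
    exact ⟨V ∩ U, hVo.inter hUopen, ⟨hVy, hy⟩, inter_subset_right,
      hVinj.mono inter_subset_left⟩
  choose V hVo hVy hVU hVinj using loc
  obtain ⟨W0, hW0, hW0U⟩ : ∃ W : ℕ → Set (Fin m → ℝ),
      (∀ k, IsOpen (W k) ∧ W k ⊆ U ∧ InjOn Φ (W k)) ∧ ⋃ k, W k = U := by
    obtain ⟨T, hTc, hTU⟩ := TopologicalSpace.isOpen_iUnion_countable V hVo
    have hTU' : ⋃ i ∈ T, V i = U := by
      rw [hTU]
      apply subset_antisymm
      · exact iUnion_subset fun i => hVU i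
      · intro y hy; exact mem_iUnion.2 ⟨⟨y, hy⟩, hVy _⟩
    rcases T.eq_empty_or_nonempty with hT | hT
    · refine ⟨fun _ => ∅, fun k => ⟨isOpen_empty, empty_subset _, injOn_empty _⟩, ?_⟩
      simp [← hTU', hT]
    · obtain ⟨e, he⟩ := hTc.exists_eq_range hT
      refine ⟨fun k => V (e k), fun k => ⟨hVo _, hVU _, hVinj _⟩, ?_⟩
      rw [← hTU', he]
      ext z; simp [mem_iUnion]
  set W : ℕ → Set (Fin m → ℝ) := disjointed W0 with hWdef
  have hWmeas : ∀ k, MeasurableSet (W k) :=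
    MeasurableSet.disjointed fun k => (hW0 k).1.measurableSet
  have hWU : ∀ k, W k ⊆ U := fun k => (disjointed_subset W0 k).trans (hW0 k).2.1
  have hWinj : ∀ k, InjOn Φ (W k) := fun k => ((hW0 k).2.2).mono (disjointed_subset W0 k)
  have hWdisj : Pairwise (Disjoint on W) := disjoint_disjointed W0
  have hWunion : ⋃ k, W k = U := by rw [hWdef, iUnion_disjointed, hW0U]
  have hfd : ∀ k, ∀ y ∈ W k, HasFDerivWithinAt Φ (fderiv ℝ Φ y) (W k) y :=
    fun k y _ => (hd y).hasFDerivAt.hasFDerivWithinAt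
  have hme : ∀ k, MeasurableEmbedding ((W k).restrict Φ) := fun k =>
    measurableEmbedding_of_fderivWithin (hWmeas k) (hfd k) (hWinj k)
  have himgmeas : ∀ k, MeasurableSet (Φ '' W k) := fun k =>
    measurable_image_of_fderivWithin (hWmeas k) (hfd k) (hWinj k)
  -- the pieces
  set g : ℕ → (Fin m → ℝ) → ℝ :=
    fun k => Function.extend ((W k).restrict Φ) (fun y => h (y : Fin m → ℝ)) (fun _ => 0)
    with hgdef
  have hgmeas : ∀ k, Measurable (g k) := fun k =>
    (hme k).measurable_extend (hh.measurable.comp measurable_subtype_coe) measurable_const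
  have hg1 : ∀ k, ∀ y ∈ W k, g k (Φ y) = h y := by
    intro k y hy
    have hinj : Injective ((W k).restrict Φ) := (injOn_iff_injective.mp (hWinj k))
    exact hinj.extend_apply (fun y : ↥(W k) => h (y : Fin m → ℝ)) (fun _ => 0) ⟨y, hy⟩
  have hg0 : ∀ k x, x ∉ Φ '' W k → g k x = 0 := by
    intro k x hx
    apply Function.extend_apply'
    rintro ⟨b, hb⟩
    exact hx ⟨b, b.2, hb⟩
  -- zero set
  set Z : Set (Fin m → ℝ) := Uᶜ with hZ
  have hZnull : volume (Φ '' Z) = 0 := by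
    apply addHaar_image_eq_zero_of_det_fderivWithin_eq_zero volume
      (f' := fderiv ℝ Φ) (fun y _ => (hd y).hasFDerivAt.hasFDerivWithinAt)
    intro y hy
    have hy' : ¬ (fderiv ℝ Φ y).det ≠ 0 := hy
    exact not_not.1 hy'
  -- step 1: pointwise identity away from Φ '' Z
  have key : ∀ x, x ∉ Φ '' Z → (∑' y : ↥(Φ ⁻¹' {x}), h (y : Fin m → ℝ)) = ∑' k, g k x := by
    intro x hx
    have hfibU : ∀ y, Φ y = x → y ∈ U := by
      intro y hy
      by_contra hyU
      exact hx ⟨y, hyU, hy⟩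
    have himg : ∀ kk : support fun k => g k x, x ∈ Φ '' W kk := by
      rintro ⟨k, hk⟩
      by_contra hxk
      exact hk (hg0 k x hxk)
    refine tsum_eq_tsum_of_ne_zero_bij
      (fun kk => ⟨(himg kk).choose, by
        simpa [Set.mem_preimage] using (himg kk).choose_spec.2⟩) ?_ ?_ ?_
    · rintro kk₁ kk₂ hkk
      have h1 := (himg kk₁).choose_spec.1
      have h2 := (himg kk₂).choose_spec.1
      have : (himg kk₁).choose = (himg kk₂).choose := by
        simpa [Subtype.ext_iff] using hkk
      rw [this] at h1
      by_contra hne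
      have hne' : (kk₁ : ℕ) ≠ (kk₂ : ℕ) := fun hc => hne (Subtype.ext hc)
      exact (hWdisj hne').le_bot ⟨h1, h2⟩ |>.elim
    · rintro ⟨y, hy⟩ hyne
      have hyx : Φ y = x := by simpa [Set.mem_preimage] using hy
      have hyU : y ∈ U := hfibU y hyx
      rw [← hWunion] at hyU
      obtain ⟨k, hk⟩ := mem_iUnion.1 hyU
      have hgk : g k x = h y := by rw [← hyx]; exact hg1 k y hk
      have hkne : k ∈ support fun k => g k x := by
        simp only [mem_support, hgk]
        simpa using hyne
      refine ⟨⟨k, hkne⟩, ?_⟩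
      have hc1 := (himg ⟨k, hkne⟩).choose_spec.1
      have hc2 := (himg ⟨k, hkne⟩).choose_spec.2
      exact Subtype.ext (hWinj k hc1 hk (by rw [hc2, hyx]))
    · rintro ⟨k, hk⟩
      have hc1 := (himg ⟨k, hk⟩).choose_spec.1
      have hc2 := (himg ⟨k, hk⟩).choose_spec.2
      simp only
      rw [← hg1 k _ hc1, hc2]
  -- replace the integrand a.e.
  have hae : ∀ᵐ x, x ∉ Φ '' Z := measure_eq_zero_iff_ae_notMem.1 hZnull
  rw [integral_congr_ae (g := fun x => ∑' k, g k x)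
    (hae.mono fun x hx => key x hx)]
  set J : (Fin m → ℝ) → ℝ := fun y => |(fderiv ℝ Φ y).det| * h y with hJdef
  have hJc : Continuous J := hdc.abs.mul hh
  have hJco : HasCompactSupport J := hco.mul_left
  have hJint : Integrable J := hJc.integrable_of_hasCompactSupport hJco
  have hgint : ∀ k, ∫ x, g k x = ∫ y in W k, J y := by
    intro k
    have hgind : g k = (Φ '' W k).indicator (g k) := by
      funext x
      by_cases hx : x ∈ Φ '' W k
      · rw [indicator_of_mem hx]
      · rw [indicator_of_notMem hx, hg0 k x hx]
    conv_lhs => rw [hgind]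
    rw [integral_indicator (himgmeas k),
      integral_image_eq_integral_abs_det_fderiv_smul volume (hWmeas k) (hfd k) (hWinj k) (g k)]
    apply setIntegral_congr_fun (hWmeas k)
    intro y hy
    simp only [smul_eq_mul, hg1 k y hy, hJdef]
  have hglint : ∀ k, (∫⁻ x, ‖g k x‖₊)
      = ∫⁻ y in W k, ENNReal.ofReal |(fderiv ℝ Φ y).det| * ‖h y‖₊ := by
    intro k
    have hgind : (fun x => (‖g k x‖₊ : ℝ≥0∞)) = (Φ '' W k).indicator fun x => (‖g k x‖₊ : ℝ≥0∞) := by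
      funext x
      by_cases hx : x ∈ Φ '' W k
      · rw [indicator_of_mem hx]
      · rw [indicator_of_notMem hx, hg0 k x hx]; simp
    rw [hgind, lintegral_indicator (himgmeas k) _,
      lintegral_image_eq_lintegral_abs_det_fderiv_mul volume (hWmeas k) (hfd k) (hWinj k)]
    apply setLIntegral_congr_fun (hWmeas k)
    intro y hy
    simp only
    rw [hg1 k y hy]
  have hnorm : (fun y => ENNReal.ofReal |(fderiv ℝ Φ y).det| * (‖h y‖₊ : ℝ≥0∞))
      = fun y => (‖J y‖₊ : ℝ≥0∞) := by
    funext y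
    rw [hJdef]
    simp only [nnnorm_mul, ENNReal.coe_mul, ← enorm_eq_nnnorm, Real.enorm_eq_ofReal (abs_nonneg _)]
  have hfin : (∑' k, ∫⁻ x, ‖g k x‖₊) ≠ ⊤ := by
    have h1 : (∑' k, ∫⁻ x, ‖g k x‖₊)
        = ∫⁻ y in ⋃ k, W k, ENNReal.ofReal |(fderiv ℝ Φ y).det| * ‖h y‖₊ := by
      rw [lintegral_iUnion hWmeas hWdisj]
      exact tsum_congr hglint
    rw [h1]
    refine ne_of_lt (lt_of_le_of_lt (setLIntegral_le_lintegral _ _) ?_)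
    rw [hnorm]
    exact hJint.2
  rw [integral_tsum (fun k => (hgmeas k).aestronglyMeasurable) hfin]
  calc (∑' k, ∫ x, g k x) = ∑' k, ∫ y in W k, J y := tsum_congr hgint
    _ = ∫ y in ⋃ k, W k, J y := (integral_iUnion hWmeas hWdisj hJint.integrableOn).symm
    _ = ∫ y in U, J y := by rw [hWunion]
    _ = ∫ y, J y := by
        apply setIntegral_eq_integral_of_forall_compl_eq_zero
        intro y hy
        have : (fderiv ℝ Φ y).det = 0 := not_not.1 hy
        simp [hJdef, this]

/-- the area formula on the graph `S = {x : x_l = F(x°)}` (with `l` not the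
last coordinate), with the surface integral written in the graph parametrization
`dS = √(1+|∇F|²) dx°`, so that `∫_S |n_S·e_d| f dS = ∫ |∂_{x_d}F(y)| f(y, F(y)) dy`. -/
theorem stmt_13 (n : ℕ) (l : Fin (n+2)) (hl : l ≠ Fin.last (n+1))
    (F : (Fin (n+1) → ℝ) → ℝ) (hF : ContDiff ℝ 1 F)
    (f : (Fin (n+2) → ℝ) → ℝ) (hf : ContDiff ℝ (⊤ : ℕ∞) f) (hsupp : HasCompactSupport f) :
    (∫ xhat : Fin (n+1) → ℝ,
        ∑' t : {t : ℝ | F (fun i => (Fin.snoc xhat t : Fin (n+2) → ℝ) (l.succAbove i))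
                  = (Fin.snoc xhat t : Fin (n+2) → ℝ) l},
          f (Fin.snoc xhat (t : ℝ)))
      = ∫ y : Fin (n+1) → ℝ,
          |fderiv ℝ F y (Pi.single (Fin.last n) 1)| * f (l.insertNth (F y) y) := by
  classical
  obtain ⟨l', rfl⟩ := Fin.exists_castSucc_eq.mpr hl
  set P : (Fin (n+1) → ℝ) → (Fin (n+2) → ℝ) := fun y => (Fin.castSucc l').insertNth (F y) y
    with hPdef
  set h : (Fin (n+1) → ℝ) → ℝ := fun y => f (P y) with hhdef
  set Φ : (Fin (n+1) → ℝ) → (Fin (n+1) → ℝ) := fun y => l'.insertNth (F y) (Fin.init y)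
    with hΦdef
  have hPsA : ∀ (y : Fin (n+1) → ℝ) i, P y ((Fin.castSucc l').succAbove i) = y i := by
    intro y i; simp [hPdef]
  have hPl : ∀ y : Fin (n+1) → ℝ, P y (Fin.castSucc l') = F y := by
    intro y; simp [hPdef]
  have hlastA : (Fin.castSucc l').succAbove (Fin.last n) = Fin.last (n+1) := by
    rw [Fin.succAbove_of_le_castSucc _ _ (Fin.castSucc_le_castSucc_iff.mpr (Fin.le_last l')),
      Fin.succ_last]
  have hΦP : ∀ y, Fin.init (P y) = Φ y := by
    intro y; funext j
    refine Fin.succAboveCases (α := fun j => Fin.init (P y) j = Φ y j) l' ?_ ?_ j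
    · show P y (Fin.castSucc l') = Φ y l'
      simp [hPdef, hΦdef]
    · intro i
      show P y (Fin.castSucc (l'.succAbove i)) = Φ y (l'.succAbove i)
      rw [← Fin.castSucc_succAbove_castSucc, hPsA]
      simp [hΦdef, Fin.init]
  -- the full point reconstruction
  have hxP : ∀ (xhat : Fin (n+1) → ℝ) (t : ℝ),
      F (fun i => (Fin.snoc xhat t : Fin (n+2) → ℝ) ((Fin.castSucc l').succAbove i))
        = (Fin.snoc xhat t : Fin (n+2) → ℝ) (Fin.castSucc l') →
      P (fun i => (Fin.snoc xhat t : Fin (n+2) → ℝ) ((Fin.castSucc l').succAbove i))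
        = Fin.snoc xhat t := by
    intro xhat t hcond
    show (Fin.castSucc l').insertNth _ _ = _
    rw [hcond]
    exact Fin.insertNth_self_removeNth _ _
  have hPfull : ∀ (xhat : Fin (n+1) → ℝ) (y : Fin (n+1) → ℝ), Φ y = xhat →
      P y = Fin.snoc xhat (y (Fin.last n)) := by
    intro xhat y hy
    have h1 : Fin.init (P y) = xhat := by rw [hΦP]; exact hy
    have h2 : P y (Fin.last (n+1)) = y (Fin.last n) := by rw [← hlastA]; exact hPsA y (Fin.last n)
    rw [← h1, ← h2]
    exact (Fin.snoc_init_self (P y)).symm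
  have key : ∀ xhat : Fin (n+1) → ℝ,
      (∑' t : {t : ℝ | F (fun i => (Fin.snoc xhat t : Fin (n+2) → ℝ)
                ((Fin.castSucc l').succAbove i))
          = (Fin.snoc xhat t : Fin (n+2) → ℝ) (Fin.castSucc l')}, f (Fin.snoc xhat (t : ℝ)))
      = ∑' y : ↥(Φ ⁻¹' {xhat}), h (y : Fin (n+1) → ℝ) := by
    intro xhat
    have fwd : ∀ t : {t : ℝ | F (fun i => (Fin.snoc xhat t : Fin (n+2) → ℝ)
          ((Fin.castSucc l').succAbove i))
          = (Fin.snoc xhat t : Fin (n+2) → ℝ) (Fin.castSucc l')},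
        (fun i => (Fin.snoc xhat (t : ℝ) : Fin (n+2) → ℝ) ((Fin.castSucc l').succAbove i))
          ∈ Φ ⁻¹' {xhat} := by
      intro t
      have hPt := hxP xhat t t.2
      simp only [Set.mem_preimage, Set.mem_singleton_iff]
      rw [← hΦP, hPt]
      exact Fin.init_snoc _ _
    have bwd : ∀ y : ↥(Φ ⁻¹' {xhat}), ((y : Fin (n+1) → ℝ) (Fin.last n)) ∈
        {t : ℝ | F (fun i => (Fin.snoc xhat t : Fin (n+2) → ℝ) ((Fin.castSucc l').succAbove i))
          = (Fin.snoc xhat t : Fin (n+2) → ℝ) (Fin.castSucc l')} := by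
      rintro ⟨y, hy⟩
      have hy' : Φ y = xhat := hy
      have hP := hPfull xhat y hy'
      simp only [Set.mem_setOf_eq]
      rw [← hP]
      have hyy : (fun i => P y ((Fin.castSucc l').succAbove i)) = y := funext fun i => hPsA y i
      rw [hyy, hPl]
    let e : {t : ℝ | F (fun i => (Fin.snoc xhat t : Fin (n+2) → ℝ)
          ((Fin.castSucc l').succAbove i))
          = (Fin.snoc xhat t : Fin (n+2) → ℝ) (Fin.castSucc l')} ≃ ↥(Φ ⁻¹' {xhat}) :=
      { toFun := fun t => ⟨fun i => (Fin.snoc xhat (t : ℝ) : Fin (n+2) → ℝ)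
          ((Fin.castSucc l').succAbove i), fwd t⟩
        invFun := fun y => ⟨(y : Fin (n+1) → ℝ) (Fin.last n), bwd y⟩
        left_inv := by
          rintro ⟨t, ht⟩
          apply Subtype.ext
          show (Fin.snoc xhat t : Fin (n+2) → ℝ) ((Fin.castSucc l').succAbove (Fin.last n)) = t
          rw [hlastA]
          exact Fin.snoc_last _ _
        right_inv := by
          rintro ⟨y, hy⟩
          apply Subtype.ext
          funext i
          show (Fin.snoc xhat (y (Fin.last n)) : Fin (n+2) → ℝ)
            ((Fin.castSucc l').succAbove i) = y i
          rw [← hPfull xhat y hy]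
          exact hPsA y i }
    rw [← Equiv.tsum_eq e (fun y : ↥(Φ ⁻¹' {xhat}) => h (y : Fin (n+1) → ℝ))]
    apply tsum_congr
    intro t
    show f (Fin.snoc xhat (t : ℝ)) = f (P (fun i => (Fin.snoc xhat (t : ℝ) : Fin (n+2) → ℝ)
      ((Fin.castSucc l').succAbove i)))
    rw [hxP xhat t t.2]
  -- continuity and compact support of h
  have hPc : Continuous P := by
    apply continuous_pi
    intro j
    refine Fin.succAboveCases (α := fun j => Continuous fun y => P y j) (Fin.castSucc l')
      ?_ ?_ j
    · simp only [hPl]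
      exact hF.continuous
    · intro i
      simp only [hPsA]
      exact continuous_apply i
  have hhc : Continuous h := hf.continuous.comp hPc
  have hhco : HasCompactSupport h := by
    apply HasCompactSupport.intro (hsupp.image (continuous_pi
      (fun i : Fin (n+1) => continuous_apply ((Fin.castSucc l').succAbove i))))
    intro y hy
    by_contra hy0
    apply hy
    refine ⟨P y, subset_tsupport f ?_, funext fun i => hPsA y i⟩
    simp only [Function.mem_support]
    intro hc
    exact hy0 (by simp [hhdef, hc])
  -- factorization Φ = Pif ∘ Ψ
  set Ψ : (Fin (n+1) → ℝ) → (Fin (n+1) → ℝ) := fun y => Function.update y (Fin.last n) (F y)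
    with hΨdef
  set Pif : (Fin (n+1) → ℝ) → (Fin (n+1) → ℝ) :=
    fun w => l'.insertNth (w (Fin.last n)) (Fin.init w) with hPifdef
  have hupd1 : ∀ y : Fin (n+1) → ℝ, Function.update y (Fin.last n) (F y) (Fin.last n) = F y :=
    fun y => Function.update_self _ _ _
  have hupd2 : ∀ y : Fin (n+1) → ℝ,
      Fin.init (Function.update y (Fin.last n) (F y)) = Fin.init y := by
    intro y; funext i
    exact Function.update_of_ne (Fin.castSucc_lt_last i).ne _ _
  have hfact : ∀ y, Pif (Ψ y) = Φ y := by
    intro y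
    show l'.insertNth (Function.update y (Fin.last n) (F y) (Fin.last n))
      (Fin.init (Function.update y (Fin.last n) (F y))) = Φ y
    rw [hupd1, hupd2, hΦdef]
  -- linear structure of Pif
  have hPiadd : ∀ a b : Fin (n+1) → ℝ, Pif (a + b) = Pif a + Pif b := by
    intro a b
    funext j
    refine Fin.succAboveCases (α := fun j => Pif (a+b) j = (Pif a + Pif b) j) l' ?_ ?_ j
    · simp [hPifdef]
    · intro i
      simp [hPifdef, Fin.init]
  have hPismul : ∀ (c : ℝ) (a : Fin (n+1) → ℝ), Pif (c • a) = c • Pif a := by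
    intro c a
    funext j
    refine Fin.succAboveCases (α := fun j => Pif (c • a) j = (c • Pif a) j) l' ?_ ?_ j
    · simp [hPifdef]
    · intro i
      simp [hPifdef, Fin.init]
  let Pie : (Fin (n+1) → ℝ) ≃ₗ[ℝ] (Fin (n+1) → ℝ) :=
    { toFun := Pif
      map_add' := hPiadd
      map_smul' := hPismul
      invFun := fun x => Fin.snoc (fun i => x (l'.succAbove i)) (x l')
      left_inv := by
        intro w
        show Fin.snoc (fun i => Pif w (l'.succAbove i)) (Pif w l') = w
        have h1 : (fun i => Pif w (l'.succAbove i)) = Fin.init w := by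
          funext i; simp [hPifdef]
        have h2 : Pif w l' = w (Fin.last n) := by simp [hPifdef]
        rw [h1, h2]
        exact Fin.snoc_init_self w
      right_inv := by
        intro x
        show Pif (Fin.snoc (fun i => x (l'.succAbove i)) (x l')) = x
        rw [hPifdef]
        simp only [Fin.snoc_last, Fin.init_snoc]
        exact Fin.insertNth_self_removeNth l' x }
  set PiL : (Fin (n+1) → ℝ) →L[ℝ] (Fin (n+1) → ℝ) :=
    LinearMap.toContinuousLinearMap Pie.toLinearMap with hPiLdef
  have hPiLf : ∀ w, PiL w = Pif w := fun w => rfl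
  -- smoothness of Φ
  have hΨcd : ContDiff ℝ 1 Ψ := by
    apply contDiff_pi.2
    intro j
    by_cases hj : j = Fin.last n
    · subst hj
      simp only [hΨdef, Function.update_self]
      exact hF
    · simp only [hΨdef, Function.update_of_ne hj]
      exact (ContinuousLinearMap.proj j : ((Fin (n+1)) → ℝ) →L[ℝ] ℝ).contDiff
  have hΦΨ : Φ = (fun w => PiL w) ∘ Ψ := funext fun y => (hfact y).symm
  have hΦcd : ContDiff ℝ 1 Φ := by
    rw [hΦΨ]
    exact PiL.contDiff.comp hΨcd
  -- derivative of Ψ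
  set DΨ : (Fin (n+1) → ℝ) → ((Fin (n+1) → ℝ) →L[ℝ] (Fin (n+1) → ℝ)) := fun y =>
    ContinuousLinearMap.pi (fun j => if j = Fin.last n then fderiv ℝ F y
      else ContinuousLinearMap.proj j) with hDΨdef
  have hΨd : ∀ y, HasFDerivAt Ψ (DΨ y) y := by
    intro y
    apply hasFDerivAt_pi''
    intro j
    rw [show (ContinuousLinearMap.proj j).comp (DΨ y)
      = if j = Fin.last n then fderiv ℝ F y else ContinuousLinearMap.proj j from
      ContinuousLinearMap.proj_pi _ j]
    by_cases hj : j = Fin.last n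
    · subst hj
      simp only [hΨdef, Function.update_self, if_pos rfl]
      exact (hF.differentiable one_ne_zero y).hasFDerivAt
    · simp only [hΨdef, Function.update_of_ne hj, if_neg hj]
      exact hasFDerivAt_apply j y
  have hdetΨ : ∀ y, (DΨ y).det = fderiv ℝ F y (Pi.single (Fin.last n) 1) := by
    intro y
    have hmat : LinearMap.toMatrix (Pi.basisFun ℝ (Fin (n+1))) (Pi.basisFun ℝ (Fin (n+1)))
        (DΨ y : (Fin (n+1) → ℝ) →ₗ[ℝ] (Fin (n+1) → ℝ))
        = Matrix.updateRow (1 : Matrix (Fin (n+1)) (Fin (n+1)) ℝ) (Fin.last n)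
            (fun i => fderiv ℝ F y (Pi.single i 1)) := by
      ext j i
      rw [LinearMap.toMatrix_apply]
      by_cases hj : j = Fin.last n
      · subst hj
        simp [hDΨdef, Matrix.updateRow_self]
      · simp [hDΨdef, hj, Matrix.updateRow_ne hj, Matrix.one_apply, Pi.single_apply,
          eq_comm]
    show LinearMap.det (DΨ y : (Fin (n+1) → ℝ) →ₗ[ℝ] (Fin (n+1) → ℝ)) = _
    rw [← LinearMap.det_toMatrix (Pi.basisFun ℝ (Fin (n+1))), hmat]
    have hrow : (fun i => fderiv ℝ F y (Pi.single i 1)) =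
        ∑ k, (fderiv ℝ F y (Pi.single k 1)) • (1 : Matrix (Fin (n+1)) (Fin (n+1)) ℝ) k := by
      funext i
      simp [Matrix.one_apply, mul_ite, Finset.sum_ite_eq]
    rw [hrow, Matrix.det_updateRow_sum]
    simp
  -- |det PiL| = 1 via measure preservation
  set eT : (Fin (n+1) → ℝ) ≃ᵐ (Fin (n+1) → ℝ) :=
    (MeasurableEquiv.piFinSuccAbove (fun _ : Fin (n+1) => ℝ) (Fin.last n)).trans
      (MeasurableEquiv.piFinSuccAbove (fun _ : Fin (n+1) => ℝ) l').symm with heTdef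
  have heTf : ∀ w, eT w = Pif w := by
    intro w
    show (MeasurableEquiv.piFinSuccAbove (fun _ : Fin (n+1) => ℝ) l').symm
        ((MeasurableEquiv.piFinSuccAbove (fun _ : Fin (n+1) => ℝ) (Fin.last n)) w) = Pif w
    rw [hPifdef]
    simp [MeasurableEquiv.piFinSuccAbove, Fin.insertNthEquiv, Fin.removeNth, Fin.init,
      Fin.succAbove_last]
  have hmp : MeasurePreserving eT volume volume := by
    have h1 := measurePreserving_piFinSuccAbove
      (fun _ : Fin (n+1) => (volume : Measure ℝ)) (Fin.last n)
    have h2 := MeasurePreserving.symm _ (measurePreserving_piFinSuccAbove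
      (fun _ : Fin (n+1) => (volume : Measure ℝ)) l')
    have h3 := h2.comp h1
    rw [← volume_pi] at h3
    exact h3
  have hdetPi : |LinearMap.det Pie.toLinearMap| = 1 := by
    have hball0 : volume (Metric.ball (0 : Fin (n+1) → ℝ) 1) ≠ 0 :=
      (Metric.measure_ball_pos volume 0 one_pos).ne'
    have hballt : volume (Metric.ball (0 : Fin (n+1) → ℝ) 1) ≠ ⊤ := measure_ball_lt_top.ne
    have himg : volume (Pif '' Metric.ball (0 : Fin (n+1) → ℝ) 1)
        = volume (Metric.ball (0 : Fin (n+1) → ℝ) 1) := by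
      have h4 : Pif '' Metric.ball (0 : Fin (n+1) → ℝ) 1
          = eT.symm ⁻¹' Metric.ball (0 : Fin (n+1) → ℝ) 1 := by
        rw [← MeasurableEquiv.image_eq_preimage_symm]
        exact Set.image_congr fun x _ => (heTf x).symm
      rw [h4]
      exact (MeasurePreserving.symm _ hmp).measure_preimage
        measurableSet_ball.nullMeasurableSet
    have hlin := volume.addHaar_image_linearMap Pie.toLinearMap
      (Metric.ball (0 : Fin (n+1) → ℝ) 1)
    have hPe : ⇑Pie.toLinearMap = Pif := rfl
    rw [hPe, himg] at hlin
    have h5 : ENNReal.ofReal |LinearMap.det Pie.toLinearMap| = 1 := by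
      have h6 : ENNReal.ofReal |LinearMap.det Pie.toLinearMap|
            * volume (Metric.ball (0 : Fin (n+1) → ℝ) 1)
          = 1 * volume (Metric.ball (0 : Fin (n+1) → ℝ) 1) := by
        rw [one_mul]
        exact hlin.symm
      exact (ENNReal.mul_left_inj hball0 hballt).mp h6
    exact ENNReal.ofReal_eq_one.mp h5
  -- assemble
  have h0 : (∫ xhat : Fin (n+1) → ℝ,
      ∑' t : {t : ℝ | F (fun i => (Fin.snoc xhat t : Fin (n+2) → ℝ)
                ((Fin.castSucc l').succAbove i))
          = (Fin.snoc xhat t : Fin (n+2) → ℝ) (Fin.castSucc l')}, f (Fin.snoc xhat (t : ℝ)))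
      = ∫ xhat, ∑' y : ↥(Φ ⁻¹' {xhat}), h (y : Fin (n+1) → ℝ) :=
    integral_congr_ae (Filter.Eventually.of_forall key)
  rw [h0, area_formula hΦcd hhc hhco]
  apply integral_congr_ae
  apply Filter.Eventually.of_forall
  intro y
  show |(fderiv ℝ Φ y).det| * h y
    = |fderiv ℝ F y (Pi.single (Fin.last n) 1)| * f ((Fin.castSucc l').insertNth (F y) y)
  have hfder : fderiv ℝ Φ y = PiL.comp (DΨ y) := by
    have hc : HasFDerivAt Φ (PiL.comp (DΨ y)) y := by
      rw [hΦΨ]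
      exact (PiL.hasFDerivAt (x := Ψ y)).comp y (hΨd y)
    exact hc.fderiv
  have hdet : (PiL.comp (DΨ y)).det = LinearMap.det Pie.toLinearMap * (DΨ y).det := by
    show LinearMap.det ((PiL.comp (DΨ y) : (Fin (n+1) → ℝ) →ₗ[ℝ] (Fin (n+1) → ℝ))) = _
    rw [ContinuousLinearMap.toLinearMap_comp, LinearMap.det_comp]
    have hcoe : (PiL : (Fin (n+1) → ℝ) →ₗ[ℝ] (Fin (n+1) → ℝ)) = Pie.toLinearMap := by
      rw [hPiLdef]
      exact LinearMap.coe_toContinuousLinearMap _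
    rw [hcoe]
  rw [hfder, hdet, abs_mul, hdetPi, one_mul, hdetΨ]
end
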